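/- arXiv:math/0701171 — 8 statements merged into one kernel-verified Lean document; each statement's English description precedes it below -/
import Mathlib

section
/- Define polynomials F_k in Q[t] by F_0 = F_1 = 1 and F_{k+1} = F_k - t^2 F_{k-1}. Then the generating function E^{(k)}(t) of Dyck paths of height at most k equals F_k / F_{k+1} as formal power series in t. -/
/-- A walk (list of steps) is an excursion over step set `S` if all its steps lie
in `S`, all its partial sums are non-negative, and its total sum is `0`. -/
def IsExcursion (S : Set ℤ) (l : List ℤ) : Prop :=
  (∀ x ∈ l, x ∈ S) ∧ (∀ m : ℕ, 0 ≤ ((l.take m).sum)) ∧ l.sum = 0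

/-- An excursion of height at most `k`: all partial sums lie in `[0, k]`. -/
def IsBddExcursion (S : Set ℤ) (k : ℕ) (l : List ℤ) : Prop :=
  IsExcursion S l ∧ ∀ m : ℕ, (l.take m).sum ≤ (k : ℤ)

/-- The length generating function of excursions over `S` of height at most `k`. -/
noncomputable def bddExcursionGF (S : Set ℤ) (k : ℕ) : PowerSeries ℚ :=
  PowerSeries.mk fun n =>
    (Nat.card {l : List ℤ // IsBddExcursion S k l ∧ l.length = n} : ℚ)

/-!
Cutting a nonempty excursion of height at most `k + 1` at its first return to `0` writes it
uniquely as `1 :: (u ++ -1 :: r)`, where `u` (shifted down by one) has height at most `k` and `r`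
has height at most `k + 1`. Hence `E₀ = 1` and `E_{k+1} = 1 + t² E_k E_{k+1}`, and
`E_k F_{k+1} = F_k` follows by induction, since
`E_{k+1} F_{k+2} = E_{k+1} F_{k+1} - t² E_{k+1} E_k F_{k+1} = F_{k+1}`.
-/

open Finset PowerSeries

def PartialSumsIn (lo hi : ℤ) (l : List ℤ) : Prop :=
  ∀ m, (l.take m).sum ∈ Set.Icc lo hi

namespace PartialSumsIn

variable {lo hi : ℤ}

lemma mono {lo' hi' : ℤ} {l : List ℤ} (h : PartialSumsIn lo hi l) (hlo : lo' ≤ lo)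
    (hhi : hi ≤ hi') : PartialSumsIn lo' hi' l :=
  fun m => Set.Icc_subset_Icc hlo hhi (h m)

@[simp]
lemma nil_iff : PartialSumsIn lo hi [] ↔ (0 : ℤ) ∈ Set.Icc lo hi := by
  simp [PartialSumsIn]

lemma zero_mem {l : List ℤ} (h : PartialSumsIn lo hi l) : (0 : ℤ) ∈ Set.Icc lo hi := by
  simpa using h 0

@[simp]
lemma cons_iff {a : ℤ} {l : List ℤ} :
    PartialSumsIn lo hi (a :: l) ↔ (0 : ℤ) ∈ Set.Icc lo hi ∧ PartialSumsIn (lo - a) (hi - a) l := by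
  refine ⟨fun h => ⟨h.zero_mem, fun m => ?_⟩, fun ⟨h0, h⟩ m => ?_⟩
  · have := h (m + 1)
    simp only [List.take_succ_cons, List.sum_cons, Set.mem_Icc] at this ⊢
    constructor <;> linarith [this.1, this.2]
  · cases m with
    | zero => simpa using h0
    | succ m =>
      have := h m
      simp only [List.take_succ_cons, List.sum_cons, Set.mem_Icc] at this ⊢
      constructor <;> linarith [this.1, this.2]

@[simp]
lemma append_iff {l₁ l₂ : List ℤ} :
    PartialSumsIn lo hi (l₁ ++ l₂) ↔
      PartialSumsIn lo hi l₁ ∧ PartialSumsIn (lo - l₁.sum) (hi - l₁.sum) l₂ := by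
  induction l₁ generalizing lo hi with
  | nil => simpa using fun h => h.zero_mem
  | cons a l₁ ih => simp [ih, sub_sub, and_assoc]

end PartialSumsIn

lemma exists_eq_append_neg_one_cons {t : List ℤ} (hstep : ∀ x ∈ t, -1 ≤ x)
    (hneg : ∃ m, (t.take m).sum < 0) :
    ∃ u r, t = u ++ -1 :: r ∧ (∀ m, 0 ≤ (u.take m).sum) ∧ u.sum = 0 := by
  have hex : ∃ p, (t.take (p + 1)).sum < 0 := by
    obtain ⟨_ | p, hp⟩ := hneg
    · simp at hp
    · exact ⟨p, hp⟩
  set p := Nat.find hex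
  have hlast : (t.take (p + 1)).sum < 0 := Nat.find_spec hex
  have hnn : ∀ q ≤ p, 0 ≤ (t.take q).sum := by
    rintro (_ | q) hq
    · simp
    · exact not_lt.1 (Nat.find_min hex hq)
  have hp : p < t.length := by
    by_contra! hle
    have hfull := hnn t.length hle
    rw [List.take_length] at hfull
    rw [List.take_of_length_le (by omega)] at hlast
    exact hlast.not_ge hfull
  -- no step goes below `-1`, so the first negative partial sum is `-1`, reached from `0`
  have hret : (t.take p).sum = 0 ∧ t[p] = -1 := by
    have hsplit := List.sum_take_succ t p hp
    have hstep_p := hstep _ (List.getElem_mem hp)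
    have hbefore := hnn p le_rfl
    omega
  refine ⟨t.take p, t.drop (p + 1), ?_, fun m => ?_, hret.1⟩
  · rw [← hret.2, ← List.drop_eq_getElem_cons hp, List.take_append_drop]
  · rw [List.take_take]
    exact hnn _ (min_le_right _ _)

lemma length_le_of_append_neg_one_cons_eq {u u' r r' : List ℤ} (hu : u.sum = 0)
    (hu' : ∀ m, 0 ≤ (u'.take m).sum) (h : u ++ -1 :: r = u' ++ -1 :: r') :
    u'.length ≤ u.length := by
  by_contra! hlt
  have hleft : ((u ++ -1 :: r).take (u.length + 1)).sum = -1 := by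
    simp [List.take_append, List.take_of_length_le (Nat.le_succ u.length), hu]
  have hright : (u' ++ -1 :: r').take (u.length + 1) = u'.take (u.length + 1) := by
    simp [List.take_append, Nat.sub_eq_zero_of_le hlt]
  rw [h, hright] at hleft
  linarith [hu' (u.length + 1)]

lemma append_neg_one_cons_inj {u u' r r' : List ℤ} (hu : ∀ m, 0 ≤ (u.take m).sum) (hu0 : u.sum = 0)
    (hu' : ∀ m, 0 ≤ (u'.take m).sum) (hu0' : u'.sum = 0) (h : u ++ -1 :: r = u' ++ -1 :: r') :
    u = u' ∧ r = r' := by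
  have hlen := (length_le_of_append_neg_one_cons_eq hu0' hu h.symm).antisymm
    (length_le_of_append_neg_one_cons_eq hu0 hu' h)
  obtain ⟨rfl, h'⟩ := List.append_inj h hlen
  exact ⟨rfl, List.cons_injective h'⟩

lemma isBddExcursion_iff {S : Set ℤ} {k : ℕ} {l : List ℤ} :
    IsBddExcursion S k l ↔ (∀ x ∈ l, x ∈ S) ∧ PartialSumsIn 0 k l ∧ l.sum = 0 := by
  simp only [IsBddExcursion, IsExcursion, PartialSumsIn, Set.mem_Icc, forall_and]
  tauto

lemma isBddExcursion_nil (S : Set ℤ) (k : ℕ) : IsBddExcursion S k [] := by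
  simp [isBddExcursion_iff]

lemma isBddExcursion_zero_iff {S : Set ℤ} (h0 : (0 : ℤ) ∉ S) {l : List ℤ} :
    IsBddExcursion S 0 l ↔ l = [] := by
  refine ⟨fun hl => ?_, fun hl => hl ▸ isBddExcursion_nil S 0⟩
  obtain _ | ⟨a, t⟩ := l
  · rfl
  · obtain ⟨hS, hsums, -⟩ := isBddExcursion_iff.1 hl
    have ha : a = 0 := by
      have := (PartialSumsIn.cons_iff.1 hsums).2.zero_mem
      simp only [Set.mem_Icc] at this
      omega
    exact absurd (ha ▸ hS a List.mem_cons_self) h0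

lemma isBddExcursion_one_cons_append_iff {S : Set ℤ} (h1 : 1 ∈ S) (hm1 : -1 ∈ S) {k : ℕ}
    {u r : List ℤ} (hu : ∀ m, 0 ≤ (u.take m).sum) (hu0 : u.sum = 0) :
    IsBddExcursion S (k + 1) (1 :: (u ++ -1 :: r)) ↔
      IsBddExcursion S k u ∧ IsBddExcursion S (k + 1) r := by
  have hu_iff : PartialSumsIn (-1) k u ↔ PartialSumsIn 0 k u :=
    ⟨fun h m => ⟨hu m, (h m).2⟩, fun h => h.mono (by norm_num) le_rfl⟩
  simp only [isBddExcursion_iff, List.mem_cons, List.mem_append, PartialSumsIn.cons_iff,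
    PartialSumsIn.append_iff, List.sum_cons, List.sum_append, hu0]
  simp [or_imp, forall_and, h1, hm1, hu_iff, and_assoc, and_left_comm,
    (by positivity : (0 : ℤ) ≤ k + 1)]

lemma IsBddExcursion.exists_eq_one_cons_append {k : ℕ} {l : List ℤ}
    (hl : IsBddExcursion {1, -1} (k + 1) l) (hne : l ≠ []) :
    ∃ u r, IsBddExcursion {1, -1} k u ∧ IsBddExcursion {1, -1} (k + 1) r ∧
      l = 1 :: (u ++ -1 :: r) := by
  obtain ⟨a, t, rfl⟩ := List.exists_cons_of_ne_nil hne
  obtain ⟨hS, hsums, hsum⟩ := isBddExcursion_iff.1 hl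
  have hsteps : ∀ x ∈ a :: t, x = 1 ∨ x = -1 := by simpa using hS
  obtain rfl : a = 1 := by
    have := (hsums 1).1
    rcases hsteps a List.mem_cons_self with h | h <;> simp_all
  have hstep : ∀ x ∈ t, -1 ≤ x := fun x hx => by
    rcases hsteps x (List.mem_cons_of_mem _ hx) with h | h <;> simp [h]
  have hneg : ∃ m, (t.take m).sum < 0 :=
    ⟨t.length, by rw [List.take_length]; rw [List.sum_cons] at hsum; omega⟩
  obtain ⟨u, r, rfl, hu, hu0⟩ := exists_eq_append_neg_one_cons hstep hneg
  obtain ⟨hu', hr⟩ := (isBddExcursion_one_cons_append_iff (by simp) (by simp) hu hu0).1 hl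
  exact ⟨u, r, hu', hr, rfl⟩

abbrev BddExcursions (S : Set ℤ) (k n : ℕ) :=
  {l : List ℤ // IsBddExcursion S k l ∧ l.length = n}

instance (S : Set ℤ) [Finite S] (k n : ℕ) : Finite (BddExcursions S k n) := by
  refine Set.Finite.to_subtype (s := {l | IsBddExcursion S k l ∧ l.length = n}) ?_
  refine ((List.finite_length_eq S n).image (List.map Subtype.val)).subset ?_
  rintro l ⟨hl, rfl⟩
  lift l to List S using hl.1.1
  exact ⟨l, by simp, rfl⟩

lemma card_bddExcursions_succ_add_two (k m : ℕ) :
    Nat.card (BddExcursions {1, -1} (k + 1) (m + 2)) =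
      ∑ p ∈ antidiagonal m,
        Nat.card (BddExcursions {1, -1} k p.1) * Nat.card (BddExcursions {1, -1} (k + 1) p.2) := by
  let glue : (Σ p : antidiagonal m,
      BddExcursions {1, -1} k p.1.1 × BddExcursions {1, -1} (k + 1) p.1.2) →
      BddExcursions {1, -1} (k + 1) (m + 2) := fun ⟨⟨_, hp⟩, u, r⟩ =>
    ⟨1 :: (u.1 ++ -1 :: r.1),
      (isBddExcursion_one_cons_append_iff (by simp) (by simp) u.2.1.1.2.1 u.2.1.1.2.2).2
        ⟨u.2.1, r.2.1⟩,
      by simp [u.2.2, r.2.2, ← mem_antidiagonal.1 hp, add_assoc]⟩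
  have hinj : Function.Injective glue := by
    rintro ⟨⟨⟨i, j⟩, hij⟩, ⟨u, hu, hui⟩, ⟨r, hr, hrj⟩⟩
      ⟨⟨⟨i', j'⟩, hij'⟩, ⟨u', hu', hui'⟩, ⟨r', hr', hrj'⟩⟩ h
    simp only [glue, Subtype.mk.injEq, List.cons.injEq, true_and] at h
    obtain ⟨rfl, rfl⟩ := append_neg_one_cons_inj hu.1.2.1 hu.1.2.2 hu'.1.2.1 hu'.1.2.2 h
    obtain rfl : i = i' := hui.symm.trans hui'
    obtain rfl : j = j' := hrj.symm.trans hrj'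
    rfl
  have hsurj : Function.Surjective glue := by
    rintro ⟨l, hl, hlen⟩
    obtain ⟨u, r, hu, hr, rfl⟩ := hl.exists_eq_one_cons_append (by rintro rfl; simp at hlen)
    refine ⟨⟨⟨(u.length, r.length), mem_antidiagonal.2 ?_⟩, ⟨u, hu, rfl⟩, ⟨r, hr, rfl⟩⟩, rfl⟩
    simp only [List.length_cons, List.length_append] at hlen
    omega
  rw [← Nat.card_eq_of_bijective glue ⟨hinj, hsurj⟩, Nat.card_sigma]
  simp only [Nat.card_prod]
  exact Finset.sum_coe_sort (antidiagonal m) fun p =>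
    Nat.card (BddExcursions {1, -1} k p.1) * Nat.card (BddExcursions {1, -1} (k + 1) p.2)

lemma coeff_bddExcursionGF (S : Set ℤ) (k n : ℕ) :
    coeff n (bddExcursionGF S k) = Nat.card (BddExcursions S k n) :=
  coeff_mk _ _

lemma card_bddExcursions_length_zero (S : Set ℤ) (k : ℕ) :
    Nat.card (BddExcursions S k 0) = 1 := by
  rw [Nat.card_eq_one_iff_unique]
  refine ⟨⟨fun ⟨l, _, hl⟩ ⟨l', _, hl'⟩ => ?_⟩, ⟨⟨[], isBddExcursion_nil S k, rfl⟩⟩⟩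
  rw [List.length_eq_zero_iff] at hl hl'
  subst hl hl'
  rfl

lemma card_bddExcursions_length_one {S : Set ℤ} (h0 : (0 : ℤ) ∉ S) (k : ℕ) :
    Nat.card (BddExcursions S k 1) = 0 := by
  have : IsEmpty (BddExcursions S k 1) := ⟨fun ⟨l, hl, hlen⟩ => by
    obtain ⟨a, rfl⟩ := List.length_eq_one_iff.1 hlen
    have ha : a = 0 := by simpa using hl.1.2.2
    exact h0 (ha ▸ hl.1.1 a List.mem_cons_self)⟩
  simp

lemma bddExcursionGF_height_zero {S : Set ℤ} (h0 : (0 : ℤ) ∉ S) : bddExcursionGF S 0 = 1 := by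
  ext (_ | n)
  · simp [coeff_bddExcursionGF, card_bddExcursions_length_zero]
  · have : IsEmpty (BddExcursions S 0 (n + 1)) := ⟨fun ⟨l, hl, hlen⟩ => by
      rw [isBddExcursion_zero_iff h0] at hl
      simp [hl] at hlen⟩
    simp [coeff_bddExcursionGF]

lemma bddExcursionGF_succ (k : ℕ) :
    bddExcursionGF {1, -1} (k + 1) =
      1 + X ^ 2 * bddExcursionGF {1, -1} k * bddExcursionGF {1, -1} (k + 1) := by
  ext n
  rw [map_add, coeff_one, mul_assoc, mul_comm (X ^ 2), coeff_mul_X_pow', coeff_bddExcursionGF]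
  match n with
  | 0 => simp [card_bddExcursions_length_zero]
  | 1 => simp [card_bddExcursions_length_one]
  | m + 2 => simp [coeff_mul, card_bddExcursions_succ_add_two, coeff_bddExcursionGF]

lemma mul_succ_eq_of_recurrence {R : Type*} [CommRing R] (x : R) {E F : ℕ → R}
    (hbase : E 0 * F 1 = F 0) (hE : ∀ k, E (k + 1) = 1 + x * E k * E (k + 1))
    (hF : ∀ k, F (k + 2) = F (k + 1) - x * F k) (k : ℕ) :
    E k * F (k + 1) = F k := by
  induction k with
  | zero => exact hbase
  | succ k ih =>
    rw [hF k, ← ih]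
    linear_combination F (k + 1) * hE k

/-- If `F₀ = F₁ = 1` and `F_{k+1} = F_k - t² F_{k-1}`, then the generating function
of Dyck paths of height at most `k` equals `F_k / F_{k+1}` as formal power series. -/
theorem dyck_bounded_height (F : ℕ → Polynomial ℚ) (hF0 : F 0 = 1) (hF1 : F 1 = 1)
    (hFrec : ∀ k : ℕ, F (k + 2) = F (k + 1) - Polynomial.X ^ 2 * F k) (k : ℕ) :
    bddExcursionGF {1, -1} k * (F (k + 1) : PowerSeries ℚ) = (F k : PowerSeries ℚ) := by
  refine mul_succ_eq_of_recurrence (X ^ 2) (E := bddExcursionGF {1, -1})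
    (F := fun k => (F k : PowerSeries ℚ)) ?_ bddExcursionGF_succ (fun k => ?_) k
  · simp [bddExcursionGF_height_zero, hF0, hF1]
  · simp [hFrec]
end

section
/- Let S ⊂ Z be a finite step set with min S = -b, max S = a, and weights ω_s. The generating function W(t,u) of non-negative walks, counting length by t and final height by u, satisfies the functional equation u^b (1 - t P(u)) W(t,u) = u^b - t ∑_{h=1}^{b} u^{b-h} ∑_{i∈S, j≥0, i+j=-h} ω_i W_j(t), where P(u) = ∑_{s∈S} ω_s u^s and W_j is the generating function of non-negative walks ending at height j. -/
open scoped Classical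

/-- Partial sum of the first `m` steps of a walk `f : Fin n → ℤ`. -/
def psum {n : ℕ} (f : Fin n → ℤ) (m : ℕ) : ℤ :=
  ∑ i ∈ Finset.univ.filter (fun i : Fin n => (i : ℕ) < m), f i

/-- Non-negative walks of length `n` with steps in `S`. -/
noncomputable def walkSet (S : Finset ℤ) (n : ℕ) : Finset (Fin n → ℤ) :=
  (Fintype.piFinset fun _ : Fin n => S).filter fun f => ∀ m : ℕ, 0 ≤ psum f m

/-- `W_j(t)`: weighted generating function of non-negative walks ending at height `j`. -/
noncomputable def Wh {K : Type*} [Field K] (S : Finset ℤ) (ω : ℤ → K) (j : ℤ) :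
    PowerSeries K :=
  PowerSeries.mk fun n =>
    ∑ f ∈ (walkSet S n).filter (fun f => psum f n = j), ∏ i, ω (f i)

/-- `W(t,u)`: generating function of non-negative walks, `t` marking length and
`u` (the polynomial variable) marking the final height. -/
noncomputable def Wfull {K : Type*} [Field K] (S : Finset ℤ) (ω : ℤ → K) :
    PowerSeries (Polynomial K) :=
  PowerSeries.mk fun n =>
    ∑ f ∈ walkSet S n, Polynomial.C (∏ i, ω (f i)) * Polynomial.X ^ (psum f n).toNat

/-!
Compare coefficients of `t^(n+1)`. Appending a step `s` to a non-negative walk of height `p`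
multiplies its weight by `ω_s u^s`, so `u^b P(u) · [t^n] W` counts all one-step extensions of
walks of length `n`, while `u^b · [t^(n+1)] W` counts those staying non-negative. The difference
consists of the extensions `p + s = -h` with `1 ≤ h ≤ b`; for fixed `h` they contribute
`u^(b-h) ∑_{i + j = -h} ω_i [t^n] W_j`.
-/

open Finset Polynomial

section Walks

variable {S : Finset ℤ} {n : ℕ}

lemma psum_eq_sum_of_le (f : Fin n → ℤ) {m : ℕ} (h : n ≤ m) : psum f m = ∑ i, f i := by
  rw [psum, filter_true_of_mem fun i _ => i.isLt.trans_le h]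

lemma psum_eq_psum_of_le (f : Fin n → ℤ) {m : ℕ} (h : n ≤ m) : psum f m = psum f n := by
  rw [psum_eq_sum_of_le f h, psum_eq_sum_of_le f le_rfl]

lemma psum_snoc (g : Fin n → ℤ) (s : ℤ) (m : ℕ) :
    psum (Fin.snoc g s : Fin (n + 1) → ℤ) m = psum g m + if n < m then s else 0 := by
  simp [psum, sum_filter, Fin.sum_univ_castSucc]

lemma psum_snoc_self (g : Fin n → ℤ) (s : ℤ) :
    psum (Fin.snoc g s : Fin (n + 1) → ℤ) (n + 1) = psum g n + s := by
  rw [psum_snoc, if_pos n.lt_succ_self, psum_eq_psum_of_le g n.le_succ]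

lemma mem_walkSet_iff {f : Fin n → ℤ} :
    f ∈ walkSet S n ↔ (∀ i, f i ∈ S) ∧ ∀ m, 0 ≤ psum f m := by
  simp [walkSet, Fintype.mem_piFinset]

lemma psum_nonneg_of_mem_walkSet {f : Fin n → ℤ} (hf : f ∈ walkSet S n) (m : ℕ) :
    0 ≤ psum f m :=
  (mem_walkSet_iff.1 hf).2 m

lemma snoc_mem_walkSet_iff {g : Fin n → ℤ} {s : ℤ} :
    (Fin.snoc g s : Fin (n + 1) → ℤ) ∈ walkSet S (n + 1) ↔
      g ∈ walkSet S n ∧ s ∈ S ∧ 0 ≤ psum g n + s := by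
  have heights : (∀ m, 0 ≤ psum (Fin.snoc g s : Fin (n + 1) → ℤ) m) ↔
      (∀ m, 0 ≤ psum g m) ∧ 0 ≤ psum g n + s := by
    simp only [psum_snoc]
    constructor
    · intro h
      refine ⟨fun m => ?_, by simpa [psum_eq_psum_of_le g n.le_succ] using h (n + 1)⟩
      rcases le_or_gt m n with hm | hm
      · simpa [hm.not_gt] using h m
      · simpa [psum_eq_psum_of_le g hm.le] using h n
    · rintro ⟨hg, hs⟩ m
      split_ifs with hm
      · rwa [psum_eq_psum_of_le g hm.le]
      · simpa using hg m
  rw [mem_walkSet_iff, mem_walkSet_iff, Fin.forall_fin_succ', heights]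
  simp only [Fin.snoc_castSucc, Fin.snoc_last]
  tauto

lemma walkSet_zero (S : Finset ℤ) : walkSet S 0 = {Fin.elim0} := by
  ext f
  simp [mem_walkSet_iff, psum, Subsingleton.elim f Fin.elim0]

lemma sum_walkSet_succ {M : Type*} [AddCommMonoid M] (F : (Fin (n + 1) → ℤ) → M) :
    ∑ f ∈ walkSet S (n + 1), F f =
      ∑ q ∈ (S ×ˢ walkSet S n).filter (fun q => 0 ≤ psum q.2 n + q.1),
        F (Fin.snoc q.2 q.1) := by
  refine (sum_nbij' (fun q => Fin.snoc q.2 q.1) (fun f => (f (Fin.last n), Fin.init f))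
    ?_ ?_ ?_ ?_ ?_).symm
  · rintro ⟨s, g⟩ hq
    simp only [mem_filter, mem_product] at hq
    exact snoc_mem_walkSet_iff.2 ⟨hq.1.2, hq.1.1, hq.2⟩
  · intro f hf
    rw [← Fin.snoc_init_self f, snoc_mem_walkSet_iff] at hf
    simp only [mem_filter, mem_product]
    exact ⟨⟨hf.2.1, hf.1⟩, hf.2.2⟩
  · rintro ⟨s, g⟩ -
    simp
  · intro f _
    exact Fin.snoc_init_self f
  · intro q _
    rfl

end Walks

section HeightPolynomials

variable {K : Type*} [CommRing K] (S : Finset ℤ) (ω : ℤ → K) (b n : ℕ)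

noncomputable def heightPoly : K[X] :=
  ∑ f ∈ walkSet S n, C (∏ i, ω (f i)) * X ^ (psum f n).toNat

/-- `u^b` times the term of the walk `q.2` followed by the step `q.1`, even if that goes
below zero. -/
noncomputable def extensionTerm (q : ℤ × (Fin n → ℤ)) : K[X] :=
  C (ω q.1 * ∏ i, ω (q.2 i)) * X ^ ((b : ℤ) + q.1 + psum q.2 n).toNat

variable {S b}

lemma sum_step_mul_heightPoly (hS : ∀ s ∈ S, -(b : ℤ) ≤ s) :
    (∑ s ∈ S, C (ω s) * X ^ ((b : ℤ) + s).toNat) * heightPoly S ω n =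
      ∑ q ∈ S ×ˢ walkSet S n, extensionTerm ω b n q := by
  rw [heightPoly, sum_mul_sum, sum_product]
  refine sum_congr rfl fun s hs => sum_congr rfl fun g hg => ?_
  have hs := hS s hs
  have hg := psum_nonneg_of_mem_walkSet hg n
  rw [extensionTerm, show ((b : ℤ) + s + psum g n).toNat =
    ((b : ℤ) + s).toNat + (psum g n).toNat by omega, pow_add, map_mul]
  ring

lemma X_pow_mul_heightPoly_succ :
    X ^ b * heightPoly S ω (n + 1) =
      ∑ q ∈ (S ×ˢ walkSet S n).filter (fun q => 0 ≤ psum q.2 n + q.1),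
        extensionTerm ω b n q := by
  rw [heightPoly, sum_walkSet_succ, mul_sum]
  refine sum_congr rfl fun q hq => ?_
  have hq := (mem_filter.1 hq).2
  rw [extensionTerm, psum_snoc_self, Fin.prod_univ_castSucc,
    show ((b : ℤ) + q.1 + psum q.2 n).toNat = b + (psum q.2 n + q.1).toNat by omega, pow_add]
  simp only [Fin.snoc_castSucc, Fin.snoc_last, map_mul]
  ring

lemma sum_step_mul_heightPoly_sub (hS : ∀ s ∈ S, -(b : ℤ) ≤ s) :
    (∑ s ∈ S, C (ω s) * X ^ ((b : ℤ) + s).toNat) * heightPoly S ω n -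
        X ^ b * heightPoly S ω (n + 1) =
      ∑ q ∈ (S ×ˢ walkSet S n).filter (fun q => psum q.2 n + q.1 < 0),
        extensionTerm ω b n q := by
  rw [sum_step_mul_heightPoly ω n hS, X_pow_mul_heightPoly_succ,
    ← sum_filter_add_sum_filter_not _ (fun q => 0 ≤ psum q.2 n + q.1), add_sub_cancel_left]
  simp only [not_le]

/-- An extension `(i, g)` that goes below zero ends at height `-h` with `1 ≤ h ≤ b`; grouping
these by `h` gives the boundary terms of the functional equation. -/
lemma sum_extensionTerm_neg (hS : ∀ s ∈ S, -(b : ℤ) ≤ s) :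
    ∑ q ∈ (S ×ˢ walkSet S n).filter (fun q => psum q.2 n + q.1 < 0), extensionTerm ω b n q =
      ∑ h ∈ Icc 1 b, X ^ (b - h) *
        C (∑ i ∈ S.filter (fun i => i ≤ -(h : ℤ)),
          ω i * ∑ g ∈ (walkSet S n).filter (fun g => psum g n = -(h : ℤ) - i),
            ∏ j, ω (g j)) := by
  have depth_mem : ∀ q ∈ (S ×ˢ walkSet S n).filter (fun q => psum q.2 n + q.1 < 0),
      (-(psum q.2 n + q.1)).toNat ∈ Icc 1 b := by
    intro q hq
    simp only [mem_filter, mem_product] at hq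
    have := hS q.1 hq.1.1
    have := psum_nonneg_of_mem_walkSet hq.1.2 n
    rw [mem_Icc]
    omega
  rw [← sum_fiberwise_of_maps_to depth_mem]
  refine sum_congr rfl fun h hh => ?_
  rw [mem_Icc] at hh
  rw [sum_finset_product _ (S.filter (fun i => i ≤ -(h : ℤ)))
    (fun i => (walkSet S n).filter (fun g => psum g n = -(h : ℤ) - i))]
  · simp only [map_sum, mul_sum, map_mul]
    refine sum_congr rfl fun i _ => sum_congr rfl fun g hg => ?_
    rw [extensionTerm, (mem_filter.1 hg).2,
      show ((b : ℤ) + i + (-(h : ℤ) - i)).toNat = b - h by omega, map_mul]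
    ring
  · rintro ⟨i, g⟩
    simp only [mem_filter, mem_product]
    constructor
    · rintro ⟨⟨⟨hi, hg⟩, -⟩, hdepth⟩
      have := psum_nonneg_of_mem_walkSet hg n
      exact ⟨⟨hi, by omega⟩, hg, by omega⟩
    · rintro ⟨⟨hi, -⟩, hg, hp⟩
      exact ⟨⟨⟨hi, hg⟩, by omega⟩, by omega⟩

end HeightPolynomials

section GeneratingFunctions

variable {K : Type*} [Field K] (S : Finset ℤ) (ω : ℤ → K)

lemma coeff_Wfull (n : ℕ) : PowerSeries.coeff n (Wfull S ω) = heightPoly S ω n :=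
  PowerSeries.coeff_mk _ _

lemma constantCoeff_Wfull : PowerSeries.constantCoeff (Wfull S ω) = 1 := by
  rw [← PowerSeries.coeff_zero_eq_constantCoeff_apply, coeff_Wfull, heightPoly, walkSet_zero]
  simp [psum]

lemma coeff_boundary (b n : ℕ) :
    PowerSeries.coeff n
        (∑ h ∈ Icc 1 b, PowerSeries.C (X ^ (b - h)) *
          PowerSeries.map C (∑ i ∈ S.filter (fun i => i ≤ -(h : ℤ)),
            PowerSeries.C (ω i) * Wh S ω (-(h : ℤ) - i))) =
      ∑ h ∈ Icc 1 b, X ^ (b - h) *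
        C (∑ i ∈ S.filter (fun i => i ≤ -(h : ℤ)),
          ω i * ∑ g ∈ (walkSet S n).filter (fun g => psum g n = -(h : ℤ) - i),
            ∏ j, ω (g j)) := by
  simp only [map_sum, PowerSeries.coeff_C_mul, PowerSeries.coeff_map, Wh, PowerSeries.coeff_mk]

end GeneratingFunctions

theorem walk_functional_equation_general {K : Type*} [Field K] (S : Finset ℤ) (ω : ℤ → K)
    (a b : ℕ)
    (hrange : ∀ s ∈ S, -(b : ℤ) ≤ s ∧ s ≤ (a : ℤ)) :
    (PowerSeries.C (R := Polynomial K) (Polynomial.X ^ b) -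
        PowerSeries.X *
          PowerSeries.C (R := Polynomial K)
            (∑ s ∈ S, Polynomial.C (ω s) * Polynomial.X ^ ((b : ℤ) + s).toNat)) *
        Wfull S ω =
      PowerSeries.C (R := Polynomial K) (Polynomial.X ^ b) -
        PowerSeries.X *
          ∑ h ∈ Finset.Icc 1 b,
            PowerSeries.C (R := Polynomial K) (Polynomial.X ^ (b - h)) *
              PowerSeries.map Polynomial.C
                (∑ i ∈ S.filter (fun i => i ≤ -(h : ℤ)),
                  PowerSeries.C (R := K) (ω i) * Wh S ω (-(h : ℤ) - i)) := by
  have hS : ∀ s ∈ S, -(b : ℤ) ≤ s := fun s hs => (hrange s hs).1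
  refine PowerSeries.ext fun n => ?_
  rcases n with _ | n
  · simp [constantCoeff_Wfull]
  · rw [sub_mul, map_sub, map_sub, PowerSeries.coeff_C_mul, mul_assoc,
      PowerSeries.coeff_succ_X_mul, PowerSeries.coeff_succ_X_mul, PowerSeries.coeff_C_mul,
      PowerSeries.coeff_C, if_neg n.succ_ne_zero, coeff_Wfull, coeff_Wfull, coeff_boundary,
      ← sum_extensionTerm_neg ω n hS, ← sum_step_mul_heightPoly_sub ω n hS]
    ring

/-- The functional equation
`u^b (1 - t P(u)) W(t,u) = u^b - t ∑_{h=1}^{b} u^{b-h} ∑_{i∈S, j≥0, i+j=-h} ω_i W_j(t)`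
for non-negative walks with steps in `S`, where `min S = -b`, `max S = a` and
`P(u) = ∑_{s∈S} ω_s u^s` (everything multiplied through by `u^b`). -/
theorem walk_functional_equation {K : Type*} [Field K] (S : Finset ℤ) (ω : ℤ → K)
    (a b : ℕ) (haS : (a : ℤ) ∈ S) (hbS : (-(b : ℤ)) ∈ S)
    (hrange : ∀ s ∈ S, -(b : ℤ) ≤ s ∧ s ≤ (a : ℤ)) :
    (PowerSeries.C (R := Polynomial K) (Polynomial.X ^ b) -
        PowerSeries.X *
          PowerSeries.C (R := Polynomial K)
            (∑ s ∈ S, Polynomial.C (ω s) * Polynomial.X ^ ((b : ℤ) + s).toNat)) *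
        Wfull S ω =
      PowerSeries.C (R := Polynomial K) (Polynomial.X ^ b) -
        PowerSeries.X *
          ∑ h ∈ Finset.Icc 1 b,
            PowerSeries.C (R := Polynomial K) (Polynomial.X ^ (b - h)) *
              PowerSeries.map Polynomial.C
                (∑ i ∈ S.filter (fun i => i ≤ -(h : ℤ)),
                  PowerSeries.C (R := K) (ω i) * Wh S ω (-(h : ℤ) - i)) :=
  walk_functional_equation_general S ω a b hrange
end

section
/- For the step set S = {-3, 2} with unit weights, the excursion generating function E(t) satisfies D(t, E) = 0, where D(t,z) = 1 - z + t^5 z^5 (2 - z + z^2) + t^{10} z^{10}. -/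
/-- The length generating function of excursions over the step set `S`. -/
noncomputable def excursionGF (S : Set ℤ) : PowerSeries ℚ :=
  PowerSeries.mk fun n => (Nat.card {l : List ℤ // IsExcursion S l ∧ l.length = n} : ℚ)

/-!
Call a walk with steps in `{-3, 2}` nonnegative if it is at height `≥ 0` before each step (its
last step may go below `0`), and let `W(h, s)` count nonnegative walks from `h` to `s`, so that
`E = W(0, 0)`. Cutting a walk from `h ≥ 0` to `s < h` right after its first step below `h` gives
`W(h, s) = ∑_{j=-3}^{-1} F_j W(h + j, s)` with `F_j = W(0, j)`. With the first-step decomposition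
at height `0` this yields linear equations for `E, F₋₁, F₋₂, F₋₃` sharing the kernel
`1 - t (F₋₁² + F₋₂)`, whose solution is `F₋₃ = t E`, `F₋₂ = F₋₁ F₋₃²`,
`E = 1 + F₋₃ F₋₁² + F₋₁ F₋₃³` and `F₋₁ = F₋₁² F₋₃³ + F₋₃²`; eliminating `F₋₁` leaves `D(t, E) = 0`.
-/

open PowerSeries

section LengthGF

variable {α : Type*}

noncomputable def lengthGF (A : Set (List α)) : PowerSeries ℚ :=
  PowerSeries.mk fun n => (Nat.card {l // l ∈ A ∧ l.length = n} : ℚ)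

def FiniteSlices (A : Set (List α)) : Prop :=
  ∀ n, {l ∈ A | l.length = n}.Finite

theorem FiniteSlices.subset {A B : Set (List α)} (hB : FiniteSlices B) (hAB : A ⊆ B) :
    FiniteSlices A := fun n =>
  (hB n).subset fun _ hl => ⟨hAB hl.1, hl.2⟩

theorem finiteSlices_of_forall_mem {S : Set α} (hS : S.Finite) {A : Set (List α)}
    (hA : ∀ l ∈ A, ∀ x ∈ l, x ∈ S) : FiniteSlices A := by
  intro n
  have := hS.to_subtype
  refine ((List.finite_length_eq S n).image (List.map Subtype.val)).subset ?_
  rintro l ⟨hl, rfl⟩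
  exact ⟨l.pmap Subtype.mk (hA l hl), by simp, by simp [List.map_pmap]⟩

theorem Set.Finite.finiteSlices {A : Set (List α)} (hA : A.Finite) : FiniteSlices A :=
  fun _ => hA.subset fun _ hl => hl.1

theorem FiniteSlices.finite {A : Set (List α)} (hA : FiniteSlices A) (n : ℕ) :
    Finite {l // l ∈ A ∧ l.length = n} :=
  (hA n).to_subtype

theorem coeff_lengthGF (A : Set (List α)) (n : ℕ) :
    coeff n (lengthGF A) = ({l ∈ A | l.length = n}.ncard : ℚ) := by
  rw [lengthGF, coeff_mk, ← Nat.card_coe_set_eq]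
  rfl

@[simp]
theorem lengthGF_empty : lengthGF (∅ : Set (List α)) = 0 := by
  ext n
  simp [coeff_lengthGF]

theorem lengthGF_singleton (w : List α) : lengthGF {w} = X ^ w.length := by
  ext n
  rw [coeff_lengthGF, coeff_X_pow]
  split_ifs with hn
  · rw [Set.sep_eq_self_iff_mem_true.mpr (by simp [hn])]
    simp
  · rw [Set.sep_eq_empty_iff_mem_false.mpr (by simp [Ne.symm hn])]
    simp

theorem lengthGF_union {A B : Set (List α)} (hAB : Disjoint A B) (hA : FiniteSlices A)
    (hB : FiniteSlices B) : lengthGF (A ∪ B) = lengthGF A + lengthGF B := by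
  ext n
  have hslice : {l ∈ A ∪ B | l.length = n} =
      {l ∈ A | l.length = n} ∪ {l ∈ B | l.length = n} := by
    ext l
    simp only [Set.mem_union, Set.mem_ofPred_eq, or_and_right]
  rw [map_add, coeff_lengthGF, coeff_lengthGF, coeff_lengthGF, hslice,
    Set.ncard_union_eq (hAB.mono (fun _ h => h.1) (fun _ h => h.1)) (hA n) (hB n), Nat.cast_add]

open Finset in
theorem lengthGF_biUnion_image2_append {ι : Type*} (s : Finset ι) (A B : ι → Set (List α))
    (hA : ∀ i ∈ s, FiniteSlices (A i)) (hB : ∀ i ∈ s, FiniteSlices (B i))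
    (hunique : ∀ i ∈ s, ∀ j ∈ s, ∀ a ∈ A i, ∀ b ∈ B i, ∀ a' ∈ A j, ∀ b' ∈ B j,
      a ++ b = a' ++ b' → i = j ∧ a = a') :
    lengthGF (⋃ i ∈ s, Set.image2 (· ++ ·) (A i) (B i)) =
      ∑ i ∈ s, lengthGF (A i) * lengthGF (B i) := by
  ext n
  let factor : (Σ (i : s) (p : antidiagonal n),
      {a // a ∈ A i ∧ a.length = p.1.1} × {b // b ∈ B i ∧ b.length = p.1.2}) →
      {l // l ∈ ⋃ i ∈ s, Set.image2 (· ++ ·) (A i) (B i) ∧ l.length = n} :=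
    fun ⟨i, p, a, b⟩ => ⟨a.1 ++ b.1, Set.mem_biUnion i.2 (Set.mem_image2_of_mem a.2.1 b.2.1),
      by rw [List.length_append, a.2.2, b.2.2, mem_antidiagonal.mp p.2]⟩
  have hfactor : Function.Bijective factor := by
    constructor
    · rintro ⟨⟨i, hi⟩, ⟨⟨k, m⟩, _⟩, ⟨a, ha, hk⟩, ⟨b, hb, hm⟩⟩
        ⟨⟨i', hi'⟩, ⟨⟨k', m'⟩, _⟩, ⟨a', ha', hk'⟩, ⟨b', hb', hm'⟩⟩ h
      have happ : a ++ b = a' ++ b' := congrArg Subtype.val h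
      obtain ⟨rfl, rfl⟩ := hunique i hi i' hi' a ha b hb a' ha' b' hb' happ
      obtain rfl := List.append_cancel_left happ
      simp only at hk hm hk' hm'
      subst hk hm hk' hm'
      rfl
    · rintro ⟨l, hl, rfl⟩
      obtain ⟨i, hi, a, ha, b, hb, rfl⟩ := Set.mem_iUnion₂.mp hl
      exact ⟨⟨⟨i, hi⟩, ⟨(a.length, b.length), mem_antidiagonal.mpr (List.length_append ..).symm⟩,
        ⟨a, ha, rfl⟩, ⟨b, hb, rfl⟩⟩, rfl⟩
  have := fun (i : s) k => (hA i i.2).finite k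
  have := fun (i : s) k => (hB i i.2).finite k
  rw [lengthGF, coeff_mk, ← Nat.card_eq_of_bijective factor hfactor]
  simp only [Nat.card_sigma, Nat.card_prod, map_sum, coeff_mul, lengthGF, coeff_mk]
  push_cast
  rw [← Finset.sum_coe_sort s]
  exact Finset.sum_congr rfl fun i _ => Finset.sum_coe_sort (antidiagonal n) fun p =>
    (Nat.card {a // a ∈ A i ∧ a.length = p.1} : ℚ) * Nat.card {b // b ∈ B i ∧ b.length = p.2}

end LengthGF

inductive IsNonnegWalk (S : Set ℤ) : ℤ → ℤ → List ℤ → Prop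
  | nil (h : ℤ) : IsNonnegWalk S h h []
  | cons {h s a : ℤ} {l : List ℤ} :
      0 ≤ h → a ∈ S → IsNonnegWalk S (h + a) s l → IsNonnegWalk S h s (a :: l)

namespace IsNonnegWalk

variable {S : Set ℤ} {h s : ℤ} {l : List ℤ}

theorem mem_of_mem (hl : IsNonnegWalk S h s l) {x : ℤ} (hx : x ∈ l) : x ∈ S := by
  induction hl with
  | nil => simp at hx
  | cons _ ha _ ih => exact (List.mem_cons.mp hx).elim (· ▸ ha) ih

theorem iff_take : IsNonnegWalk S h s l ↔
    (∀ x ∈ l, x ∈ S) ∧ (∀ m < l.length, 0 ≤ h + (l.take m).sum) ∧ h + l.sum = s := by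
  induction l generalizing h with
  | nil =>
    constructor
    · rintro ⟨⟩
      simp
    · rintro ⟨-, -, hs⟩
      simp only [List.sum_nil, add_zero] at hs
      exact hs ▸ nil h
  | cons a l ih =>
    constructor
    · rintro (_ | ⟨hh, ha, hl⟩)
      obtain ⟨hS, htake, hsum⟩ := ih.mp hl
      refine ⟨List.forall_mem_cons.mpr ⟨ha, hS⟩, fun m hm => ?_,
        by simpa [add_assoc] using hsum⟩
      rcases m with _ | m
      · simpa using hh
      · simpa [add_assoc] using htake m (by simpa using hm)
    · rintro ⟨hS, htake, hsum⟩
      refine cons (by simpa using htake 0 (by simp)) (hS a List.mem_cons_self) (ih.mpr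
        ⟨fun x hx => hS x (List.mem_cons_of_mem a hx), fun m hm => ?_,
          by simpa [add_assoc] using hsum⟩)
      simpa [add_assoc] using htake (m + 1) (by simpa using hm)

theorem add_sum (hl : IsNonnegWalk S h s l) : h + l.sum = s :=
  (iff_take.mp hl).2.2

theorem eq_nil_of_neg (hl : IsNonnegWalk S h s l) (hh : h < 0) : l = [] ∧ h = s := by
  cases hl with
  | nil => exact ⟨rfl, rfl⟩
  | cons hh' => exact absurd hh' (not_le.mpr hh)

theorem append {k j d : ℤ} {a b : List ℤ} (ha : IsNonnegWalk S k j a) (hd : 0 ≤ d)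
    (hb : IsNonnegWalk S (d + j) s b) : IsNonnegWalk S (d + k) s (a ++ b) := by
  induction ha with
  | nil => exact hb
  | cons hk hx _ ih => exact cons (by omega) hx (by simpa [add_assoc] using ih hb)

theorem eq_of_append_eq {j j' : ℤ} {a a' b b' : List ℤ} (ha : IsNonnegWalk S h j a)
    (hj : j < 0) (ha' : IsNonnegWalk S h j' a') (hj' : j' < 0) (he : a ++ b = a' ++ b') :
    a = a' := by
  induction ha generalizing a' with
  | nil h =>
    exact ((ha'.eq_nil_of_neg hj).1).symm
  | cons hh hx _ ih =>
    cases ha' with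
    | nil => omega
    | cons _ _ ht' =>
      simp only [List.cons_append, List.cons.injEq] at he
      obtain ⟨rfl, he⟩ := he
      rw [ih hj ht' he]

/-- The walk is cut right after its first step to a height below `k`. -/
theorem exists_first_passage {c k : ℤ} (hc : ∀ a ∈ S, -c ≤ a) (hl : IsNonnegWalk S h s l)
    (hk : k ≤ h) (hs : s < k) : ∃ j ∈ Finset.Icc (-c) (-1), ∃ a b,
      IsNonnegWalk S (h - k) j a ∧ IsNonnegWalk S (k + j) s b ∧ l = a ++ b := by
  induction hl with
  | nil => omega
  | @cons h s x l hh hx hl ih =>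
    by_cases hxk : h + x < k
    · refine ⟨h + x - k, Finset.mem_Icc.mpr ⟨by linarith [hc x hx], by omega⟩, [x], l,
        cons (by omega) hx ?_, by simpa using hl, rfl⟩
      convert nil (S := S) (h - k + x) using 1
      ring
    · obtain ⟨j, hj, a, b, ha, hb, rfl⟩ := ih (by omega) hs
      exact ⟨j, hj, x :: a, b, cons (by omega) hx (by convert ha using 1; ring), hb, rfl⟩

end IsNonnegWalk

noncomputable def walkGF (S : Finset ℤ) (h s : ℤ) : PowerSeries ℚ :=
  lengthGF {l | IsNonnegWalk S h s l}

section WalkGF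

variable {S : Finset ℤ} {h s : ℤ}

theorem finiteSlices_isNonnegWalk (S : Finset ℤ) (h s : ℤ) :
    FiniteSlices {l | IsNonnegWalk S h s l} :=
  finiteSlices_of_forall_mem S.finite_toSet fun _ hl _ hx => IsNonnegWalk.mem_of_mem hl hx

theorem excursionGF_eq_walkGF (S : Finset ℤ) : excursionGF S = walkGF S 0 0 := by
  suffices {l | IsExcursion S l} = {l | IsNonnegWalk S 0 0 l} from congrArg lengthGF this
  ext l
  simp only [Set.mem_ofPred_eq, IsExcursion, IsNonnegWalk.iff_take, zero_add]
  refine and_congr_right fun _ => ⟨fun ⟨htake, hsum⟩ => ⟨fun m _ => htake m, hsum⟩,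
    fun ⟨htake, hsum⟩ => ⟨fun m => ?_, hsum⟩⟩
  rcases lt_or_ge m l.length with hm | hm
  · exact htake m hm
  · rw [List.take_of_length_le hm, hsum]

theorem walkGF_of_neg (hh : h < 0) : walkGF S h s = if h = s then 1 else 0 := by
  have : {l | IsNonnegWalk S h s l} = if h = s then {[]} else ∅ := by
    ext l
    constructor
    · intro hl
      obtain ⟨rfl, rfl⟩ := hl.eq_nil_of_neg hh
      simp
    · split_ifs with hs
      · rintro rfl
        exact hs ▸ IsNonnegWalk.nil h
      · simp
  rw [walkGF, this]
  split_ifs <;> simp [lengthGF_singleton]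

theorem setOf_isNonnegWalk_eq_union (hh : 0 ≤ h) : {l | IsNonnegWalk S h s l} =
    (if h = s then {[]} else ∅) ∪
      ⋃ a ∈ S, Set.image2 (· ++ ·) {[a]} {l | IsNonnegWalk S (h + a) s l} := by
  ext l
  constructor
  · intro hl
    cases hl with
    | nil => simp
    | @cons _ _ a t _ ha ht => exact Or.inr (Set.mem_biUnion ha ⟨[a], rfl, t, ht, rfl⟩)
  · rintro (hl | hl)
    · split_ifs at hl with hs
      · rw [Set.mem_singleton_iff.mp hl]
        exact hs ▸ IsNonnegWalk.nil h
      · exact absurd hl (Set.notMem_empty l)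
    · obtain ⟨a, ha, _, rfl, t, ht, rfl⟩ := Set.mem_iUnion₂.mp hl
      exact IsNonnegWalk.cons hh ha ht

theorem walkGF_of_nonneg (hh : 0 ≤ h) :
    walkGF S h s = (if h = s then 1 else 0) + X * ∑ a ∈ S, walkGF S (h + a) s := by
  have hset := setOf_isNonnegWalk_eq_union (S := S) (s := s) hh
  have hfin : FiniteSlices (_ ∪ _) := hset ▸ finiteSlices_isNonnegWalk S h s
  rw [walkGF, hset, lengthGF_union, lengthGF_biUnion_image2_append, Finset.mul_sum]
  · congr 1
    · split_ifs <;> simp [lengthGF_singleton]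
    · simp [lengthGF_singleton, walkGF]
  · exact fun a _ => (Set.finite_singleton [a]).finiteSlices
  · exact fun _ _ => finiteSlices_isNonnegWalk S _ _
  · rintro i - j - _ rfl b - _ rfl b' - he
    obtain ⟨rfl, -⟩ := List.cons_eq_cons.mp he
    exact ⟨rfl, rfl⟩
  · refine Set.disjoint_left.mpr fun l hl hl' => ?_
    obtain ⟨_, -, _, rfl, _, -, rfl⟩ := Set.mem_iUnion₂.mp hl'
    split_ifs at hl <;> simp at hl
  · exact hfin.subset Set.subset_union_left
  · exact hfin.subset Set.subset_union_right

theorem walkGF_eq_sum_mul {c : ℤ} (hc : ∀ a ∈ S, -c ≤ a) (hh : 0 ≤ h) (hs : s < h) :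
    walkGF S h s = ∑ j ∈ Finset.Icc (-c) (-1), walkGF S 0 j * walkGF S (h + j) s := by
  have hset : {l | IsNonnegWalk S h s l} = ⋃ j ∈ Finset.Icc (-c) (-1),
      Set.image2 (· ++ ·) {a | IsNonnegWalk S 0 j a} {b | IsNonnegWalk S (h + j) s b} := by
    ext l
    constructor
    · intro hl
      obtain ⟨j, hj, a, b, ha, hb, rfl⟩ := hl.exists_first_passage hc le_rfl hs
      rw [sub_self] at ha
      exact Set.mem_iUnion₂.mpr ⟨j, hj, a, ha, b, hb, rfl⟩
    · intro hl
      obtain ⟨j, -, a, ha, b, hb, rfl⟩ := Set.mem_iUnion₂.mp hl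
      simpa using ha.append hh hb
  rw [walkGF, hset, lengthGF_biUnion_image2_append]
  · rfl
  · exact fun _ _ => finiteSlices_isNonnegWalk S _ _
  · exact fun _ _ => finiteSlices_isNonnegWalk S _ _
  · intro j hj j' hj' a ha b _ a' ha' b' _ he
    obtain rfl := IsNonnegWalk.eq_of_append_eq ha (by linarith [(Finset.mem_Icc.mp hj).2]) ha'
      (by linarith [(Finset.mem_Icc.mp hj').2]) he
    exact ⟨ha.add_sum.symm.trans ha'.add_sum, rfl⟩

end WalkGF

theorem kernel_eq_zero_of_parametrization {R : Type*} [CommRing R] {E t u : R}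
    (hE : E = 1 + t * u ^ 2 + u * t ^ 3) (hu : u = u ^ 2 * t ^ 3 + t ^ 2) :
    1 - E + t ^ 5 * (2 - E + E ^ 2) + t ^ 10 = 0 := by
  rw [hE]
  linear_combination (-(t ^ 4 * u ^ 2 + 2 * t ^ 6 * u + t * u + t ^ 8 + 2 * t ^ 3)) * hu

section MinusThreeTwo

local notation "W" => walkGF {-3, 2}

/-- First step from height `0`, then first passages from heights `2` and `1`. -/
theorem walkGF_minus3_2_mul_kernel {s : ℤ} (hs : s ≤ 0) :
    W 0 s * (1 - X * (W 0 (-1) ^ 2 + W 0 (-2))) =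
      (if 0 = s then 1 else 0) +
        X * ((if -3 = s then 1 else 0) + (if -1 = s then W 0 (-3) else 0) +
          W 0 (-1) * ((if -1 = s then W 0 (-2) else 0) + (if -2 = s then W 0 (-3) else 0))) := by
  have hsteps : ∀ a ∈ ({-3, 2} : Finset ℤ), -3 ≤ a := by decide
  have hIcc : Finset.Icc (-3 : ℤ) (-1) = {-3, -2, -1} := by decide
  have h0 := walkGF_of_nonneg (S := {-3, 2}) (s := s) le_rfl
  have h1 := walkGF_eq_sum_mul hsteps zero_le_one (by omega : s < 1)
  have h2 := walkGF_eq_sum_mul hsteps zero_le_two (by omega : s < 2)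
  rw [Finset.sum_pair (by norm_num)] at h0
  rw [hIcc, Finset.sum_insert (by decide), Finset.sum_pair (by norm_num)] at h1 h2
  norm_num [walkGF_of_neg] at h0 h1 h2
  linear_combination h0 + X * h2 + X * W 0 (-1) * h1

theorem walkGF_minus3_2_parametrization :
    W 0 0 = 1 + X * W 0 0 * W 0 (-1) ^ 2 + W 0 (-1) * (X * W 0 0) ^ 3 ∧
      W 0 (-1) = W 0 (-1) ^ 2 * (X * W 0 0) ^ 3 + (X * W 0 0) ^ 2 := by
  have e0 := walkGF_minus3_2_mul_kernel (le_refl 0)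
  have e1 := walkGF_minus3_2_mul_kernel (by norm_num : (-1 : ℤ) ≤ 0)
  have e2 := walkGF_minus3_2_mul_kernel (by norm_num : (-2 : ℤ) ≤ 0)
  have e3 := walkGF_minus3_2_mul_kernel (by norm_num : (-3 : ℤ) ≤ 0)
  norm_num at e0 e1 e2 e3
  have ht : W 0 (-3) = X * W 0 0 := by linear_combination (-W 0 (-3)) * e0 + W 0 0 * e3
  rw [← ht]
  have h2 : W 0 (-2) = W 0 (-1) * W 0 (-3) ^ 2 := by
    linear_combination (-W 0 (-2)) * e0 + W 0 0 * e2 - W 0 (-1) * W 0 (-3) * ht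
  have h1 : W 0 (-1) = W 0 (-3) * (W 0 (-1) * W 0 (-2) + W 0 (-3)) := by
    linear_combination (-W 0 (-1)) * e0 + W 0 0 * e1 - (W 0 (-3) + W 0 (-1) * W 0 (-2)) * ht
  constructor
  · linear_combination e0 - (W 0 (-1) ^ 2 + W 0 (-2)) * ht + W 0 (-3) * h2
  · linear_combination h1 + W 0 (-3) * W 0 (-1) * h2

end MinusThreeTwo

/-- For `S = {-3, 2}`, `D(t,E) = 0` with
`D(t,z) = 1 - z + t⁵z⁵(2 - z + z²) + t¹⁰z¹⁰`. -/
theorem excursion_minus3_2 :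
    (1 : PowerSeries ℚ) - excursionGF {-3, 2} +
      PowerSeries.X ^ 5 * excursionGF {-3, 2} ^ 5 *
        (2 - excursionGF {-3, 2} + excursionGF {-3, 2} ^ 2) +
      PowerSeries.X ^ 10 * excursionGF {-3, 2} ^ 10 = 0 := by
  have hE : excursionGF {-3, 2} = walkGF {-3, 2} 0 0 := by
    rw [← excursionGF_eq_walkGF]
    simp
  obtain ⟨h0, h1⟩ := walkGF_minus3_2_parametrization
  rw [hE, ← mul_pow, ← mul_pow]
  exact kernel_eq_zero_of_parametrization h0 h1
end

section
/- For the step set S = {±1, ±2} with weights ω_{±2} = t, ω_{±1} = 1 (steps ±2 have length 2), the excursion generating function E satisfies t^8 E^4 - t^4(1+2t^2) E^3 + t^2(3+2t^2) E^2 - (1+2t^2) E + 1 = 0. -/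
/-- The generating function of excursions with steps in `{±1, ±2}` where each step
`±2` has length `2` and each step `±1` has length `1`: the coefficient of `tⁿ` is
the number of such excursions of total length `n`. -/
noncomputable def basketGF : PowerSeries ℚ :=
  PowerSeries.mk fun n =>
    (Nat.card {l : List ℤ // IsExcursion {1, -1, 2, -2} l ∧ (l.map Int.natAbs).sum = n} : ℚ)

/-!
Cutting walks at their first step, at their last step and at their first visit to `0` gives
polynomial equations for the generating functions `E` of excursions, `D` of first passages from
`1` to `0` and `G` of first passages from `2` to `0`:
`E = 1 + tDE + t²GE`, `D = tE + t²DE`, `G = tDE + t²E(1 + D²)`.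
Here walks from `0` to `1` are counted as walks from `1` to `0`, by reading them backwards with
negated steps. Multiplying the first equation by `(1 - t²E)²` and using `D(1 - t²E) = tE`
eliminates `D` and `G` and leaves the quartic.
-/

namespace LatticePath

open PowerSeries Finset

def weight (l : List ℤ) : ℕ := (l.map Int.natAbs).sum

@[simp] lemma weight_append (l l' : List ℤ) : weight (l ++ l') = weight l + weight l' := by
  simp [weight]

def IsPath (S : Set ℤ) (l : List ℤ) : Prop := ∀ x ∈ l, x ∈ S

lemma isPath_append {S : Set ℤ} {l l' : List ℤ} :
    IsPath S (l ++ l') ↔ IsPath S l ∧ IsPath S l' :=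
  List.forall_mem_append

def pathsOfWeight (S : Set ℤ) (n : ℕ) : Set (List ℤ) := {l | IsPath S l ∧ weight l = n}

noncomputable def gf (S : Set ℤ) (C : Set (List ℤ)) : PowerSeries ℚ :=
  mk fun n => (C ∩ pathsOfWeight S n).ncard

section Counting

variable {S : Set ℤ}

lemma length_le_weight (h0 : 0 ∉ S) {l : List ℤ} (hl : IsPath S l) : l.length ≤ weight l := by
  simpa [weight] using List.length_le_sum_of_one_le (l.map Int.natAbs) (by
    simp only [List.mem_map]
    rintro _ ⟨x, hx, rfl⟩
    exact Int.natAbs_pos.2 (ne_of_mem_of_not_mem (hl x hx) h0))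

lemma finite_pathsOfWeight (hS : S.Finite) (h0 : 0 ∉ S) (n : ℕ) :
    (pathsOfWeight S n).Finite := by
  have := hS.to_subtype
  refine ((List.finite_length_le S n).image (List.map Subtype.val)).subset ?_
  rintro l ⟨hl, rfl⟩
  have hlen := length_le_weight h0 hl
  lift l to List S using hl
  exact ⟨l, by simpa using hlen, rfl⟩

lemma gf_congr {C D : Set (List ℤ)} (h : ∀ l, IsPath S l → (l ∈ C ↔ l ∈ D)) :
    gf S C = gf S D := by
  have (n : ℕ) : C ∩ pathsOfWeight S n = D ∩ pathsOfWeight S n :=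
    Set.ext fun l => and_congr_left fun hl => h l hl.1
  simp only [gf, this]

@[simp] lemma gf_empty : gf S ∅ = 0 := by
  ext n
  simp [gf]

lemma gf_singleton {l : List ℤ} (hl : IsPath S l) : gf S {l} = X ^ weight l := by
  ext n
  rw [gf, coeff_mk, coeff_X_pow]
  split_ifs with h
  · simp [Set.singleton_inter_of_mem (show l ∈ pathsOfWeight S n from ⟨hl, h.symm⟩)]
  · simp [Set.singleton_inter_eq_empty.2 (show l ∉ pathsOfWeight S n from fun h' => h h'.2.symm)]

lemma gf_union (hS : S.Finite) (h0 : 0 ∉ S) {A B : Set (List ℤ)} (h : Disjoint A B) :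
    gf S (A ∪ B) = gf S A + gf S B := by
  ext n
  have hfin := finite_pathsOfWeight hS h0 n
  simp only [gf, coeff_mk, map_add, Set.union_inter_distrib_right]
  rw [Set.ncard_union_eq (h.mono Set.inter_subset_left Set.inter_subset_left)
    (hfin.inter_of_right A) (hfin.inter_of_right B)]
  push_cast
  rfl

lemma gf_image2_append (hS : S.Finite) (h0 : 0 ∉ S) {A B : Set (List ℤ)}
    (huniq : ∀ a ∈ A, ∀ b ∈ B, ∀ a' ∈ A, ∀ b' ∈ B, a ++ b = a' ++ b' → a = a') :
    gf S (Set.image2 (· ++ ·) A B) = gf S A * gf S B := by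
  ext n
  have (C : Set (List ℤ)) (k : ℕ) : Finite ↑(C ∩ pathsOfWeight S k) :=
    (finite_pathsOfWeight hS h0 k).inter_of_right C
  let e : (Σ p : antidiagonal n,
      ↑(A ∩ pathsOfWeight S p.1.1) × ↑(B ∩ pathsOfWeight S p.1.2)) →
      ↑(Set.image2 (· ++ ·) A B ∩ pathsOfWeight S n) := fun ⟨p, a, b⟩ =>
    ⟨a.1 ++ b.1, Set.mem_image2_of_mem a.2.1 b.2.1, isPath_append.2 ⟨a.2.2.1, b.2.2.1⟩, by
      rw [weight_append, a.2.2.2, b.2.2.2, mem_antidiagonal.1 p.2]⟩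
  have he : Function.Bijective e := by
    constructor
    · rintro ⟨⟨p, hp⟩, a, b⟩ ⟨⟨q, hq⟩, a', b'⟩ h
      have hab : a.1 ++ b.1 = a'.1 ++ b'.1 := congrArg Subtype.val h
      have ha := huniq _ a.2.1 _ b.2.1 _ a'.2.1 _ b'.2.1 hab
      have hb := List.append_cancel_left (ha ▸ hab)
      obtain rfl : p = q := Prod.ext (a.2.2.2.symm.trans (ha ▸ a'.2.2.2))
        (b.2.2.2.symm.trans (hb ▸ b'.2.2.2))
      simp only [Sigma.mk.injEq, heq_eq_eq, Prod.mk.injEq, true_and]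
      exact ⟨Subtype.ext ha, Subtype.ext hb⟩
    · rintro ⟨_, ⟨a, ha, b, hb, rfl⟩, hl, hw⟩
      obtain ⟨hla, hlb⟩ := isPath_append.1 hl
      exact ⟨⟨⟨(weight a, weight b), mem_antidiagonal.2 (by simpa using hw)⟩,
        ⟨a, ha, hla, rfl⟩, ⟨b, hb, hlb, rfl⟩⟩, rfl⟩
  simp only [gf, coeff_mk, coeff_mul, ← Nat.card_coe_set_eq, ← Nat.card_eq_of_bijective e he,
    Nat.card_sigma, Nat.card_prod]
  push_cast
  exact sum_coe_sort _ fun p : ℕ × ℕ =>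
    (Nat.card ↑(A ∩ pathsOfWeight S p.1) : ℚ) * Nat.card ↑(B ∩ pathsOfWeight S p.2)

lemma gf_image_cons (hS : S.Finite) (h0 : 0 ∉ S) {s : ℤ} (hs : s ∈ S) (A : Set (List ℤ)) :
    gf S ((s :: ·) '' A) = X ^ s.natAbs * gf S A := by
  have h := gf_image2_append hS h0 (A := {[s]}) (B := A) (by rintro _ rfl _ - _ rfl _ - -; rfl)
  rwa [Set.image2_singleton_left, gf_singleton (by simpa [IsPath]), weight, List.map_singleton,
    List.sum_singleton] at h

lemma gf_image_concat (hS : S.Finite) (h0 : 0 ∉ S) {s : ℤ} (hs : s ∈ S) (A : Set (List ℤ)) :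
    gf S ((· ++ [s]) '' A) = gf S A * X ^ s.natAbs := by
  have h := gf_image2_append hS h0 (A := A) (B := {[s]})
    (by rintro _ - _ rfl _ - _ rfl h; exact List.append_cancel_right h)
  rwa [Set.image2_singleton_right, gf_singleton (by simpa [IsPath]), weight, List.map_singleton,
    List.sum_singleton] at h

lemma gf_preimage {f : List ℤ → List ℤ} (hf : Function.Involutive f)
    (hw : ∀ l, weight (f l) = weight l) (hp : ∀ l, IsPath S (f l) ↔ IsPath S l)
    (C : Set (List ℤ)) : gf S (f ⁻¹' C) = gf S C := by
  ext n
  simp only [gf, coeff_mk, ← Nat.card_coe_set_eq]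
  congr 1
  refine Nat.card_congr ((hf.toPerm f).subtypeEquiv fun l => ?_)
  simp only [pathsOfWeight, Set.mem_inter_iff, Set.mem_preimage, Set.mem_ofPred_eq, hp, hw,
    Function.Involutive.coe_toPerm]

end Counting

section Walks

def nonnegWalks (a b : ℤ) : Set (List ℤ) :=
  {l | (∀ m, 0 ≤ a + (l.take m).sum) ∧ a + l.sum = b}

def firstPassages (a : ℤ) : Set (List ℤ) :=
  {l | (∀ m < l.length, 0 < a + (l.take m).sum) ∧ a + l.sum = 0}

variable {a b c s : ℤ} {l p q : List ℤ}

lemma nonnegWalks_eq_empty_of_neg_left (ha : a < 0) : nonnegWalks a b = ∅ :=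
  Set.eq_empty_of_forall_notMem fun _ h => ha.not_ge (by simpa using h.1 0)

lemma nonnegWalks_eq_empty_of_neg_right (hb : b < 0) : nonnegWalks a b = ∅ :=
  Set.eq_empty_of_forall_notMem fun l h => hb.not_ge (by simpa [h.2] using h.1 l.length)

lemma cons_mem_nonnegWalks :
    s :: l ∈ nonnegWalks a b ↔ 0 ≤ a ∧ l ∈ nonnegWalks (a + s) b := by
  simp only [nonnegWalks, Set.mem_ofPred_eq, List.sum_cons, ← add_assoc]
  constructor
  · rintro ⟨h, hsum⟩
    refine ⟨by simpa using h 0, fun m => by simpa [← add_assoc] using h (m + 1), hsum⟩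
  · rintro ⟨ha, h, hsum⟩
    refine ⟨fun m => ?_, hsum⟩
    cases m with
    | zero => simpa using ha
    | succ m => simpa [← add_assoc] using h m

lemma concat_mem_firstPassages :
    l ++ [s] ∈ firstPassages (a + 1) ↔ l ∈ nonnegWalks a (-s - 1) := by
  simp only [firstPassages, nonnegWalks, Set.mem_ofPred_eq, List.length_append,
    List.length_singleton, Nat.lt_succ_iff, List.sum_append, List.sum_singleton]
  constructor
  · rintro ⟨h, hsum⟩
    refine ⟨fun m => ?_, by omega⟩
    rcases le_or_gt m l.length with hm | hm
    · have := h m hm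
      rw [List.take_append_of_le_length hm] at this
      omega
    · have := h l.length le_rfl
      rw [List.take_append_of_le_length le_rfl, List.take_length] at this
      rw [List.take_of_length_le hm.le]
      omega
  · rintro ⟨h, hsum⟩
    refine ⟨fun m hm => ?_, by omega⟩
    rw [List.take_append_of_le_length hm]
    have := h m
    omega

lemma firstPassages_subset : firstPassages a ⊆ nonnegWalks a 0 := by
  rintro l ⟨h, hsum⟩
  refine ⟨fun m => ?_, hsum⟩
  rcases lt_or_ge m l.length with hm | hm
  · exact (h m hm).le
  · rw [List.take_of_length_le hm, hsum]

lemma append_mem_nonnegWalks (hp : p ∈ nonnegWalks a c) (hq : q ∈ nonnegWalks c b) :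
    p ++ q ∈ nonnegWalks a b := by
  refine ⟨fun m => ?_, by rw [List.sum_append, ← add_assoc, hp.2, hq.2]⟩
  rw [List.take_append, List.sum_append]
  rcases le_or_gt m p.length with hm | hm
  · simpa [Nat.sub_eq_zero_of_le hm] using hp.1 m
  · rw [List.take_of_length_le hm.le, ← add_assoc, hp.2]
    exact hq.1 _

lemma length_le_of_append_eq_of_mem_firstPassages {p' q' : List ℤ} (hp : p ∈ firstPassages a)
    (hp' : p' ∈ firstPassages a) (h : p ++ q = p' ++ q') : p'.length ≤ p.length := by
  by_contra! hlt
  have hpre : p'.take p.length = p := by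
    rw [← List.take_append_of_le_length hlt.le (l₂ := q'), ← h, List.take_left]
  have := hp'.1 p.length hlt
  rw [hpre, hp.2] at this
  exact this.false

lemma eq_of_append_eq_of_mem_firstPassages {p' q' : List ℤ} (hp : p ∈ firstPassages a)
    (hp' : p' ∈ firstPassages a) (h : p ++ q = p' ++ q') : p = p' :=
  (List.append_inj h (le_antisymm (length_le_of_append_eq_of_mem_firstPassages hp' hp h.symm)
    (length_le_of_append_eq_of_mem_firstPassages hp hp' h))).1

lemma mem_image2_of_exists_height_eq_zero (hl : l ∈ nonnegWalks a b)
    (hz : ∃ m, a + (l.take m).sum = 0) :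
    l ∈ Set.image2 (· ++ ·) (firstPassages a) (nonnegWalks 0 b) := by
  classical
  set m := Nat.find hz
  have hm : a + (l.take m).sum = 0 := Nat.find_spec hz
  refine ⟨l.take m, ⟨fun j hj => ?_, hm⟩, l.drop m, ⟨fun j => ?_, ?_⟩,
    List.take_append_drop m l⟩
  · rw [List.length_take] at hj
    have hjm : j < m := lt_of_lt_of_le hj (min_le_left _ _)
    rw [List.take_take, min_eq_left hjm.le]
    exact lt_of_le_of_ne (hl.1 j) (Ne.symm (Nat.find_min hz hjm))
  · have := hl.1 (m + j)
    rw [List.take_add, List.sum_append] at this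
    omega
  · have := List.sum_take_add_sum_drop l m
    have := hl.2
    omega

lemma nonnegWalks_add_one :
    nonnegWalks (a + 1) (b + 1) = nonnegWalks a b ∪
      Set.image2 (· ++ ·) (firstPassages (a + 1)) (nonnegWalks 0 (b + 1)) := by
  ext l
  constructor
  · intro hl
    by_cases hz : ∃ m, a + 1 + (l.take m).sum = 0
    · exact Or.inr (mem_image2_of_exists_height_eq_zero hl hz)
    · rw [not_exists] at hz
      exact Or.inl ⟨fun m => by have := hl.1 m; have := hz m; omega, by have := hl.2; omega⟩
  · rintro (hl | ⟨p, hp, q, hq, rfl⟩)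
    · exact ⟨fun m => by have := hl.1 m; omega, by have := hl.2; omega⟩
    · exact append_mem_nonnegWalks (firstPassages_subset hp) hq

lemma disjoint_nonnegWalks_image2 :
    Disjoint (nonnegWalks a b)
      (Set.image2 (· ++ ·) (firstPassages (a + 1)) (nonnegWalks 0 c)) := by
  refine Set.disjoint_left.2 ?_
  rintro _ hl ⟨p, hp, q, -, rfl⟩
  have := hl.1 p.length
  rw [List.take_left] at this
  have := hp.2
  omega

def reverseNeg (l : List ℤ) : List ℤ := (l.map (-·)).reverse

lemma reverseNeg_involutive : Function.Involutive reverseNeg := fun l => by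
  simp [reverseNeg, List.map_reverse]

lemma reverseNeg_mem_nonnegWalks (hl : l ∈ nonnegWalks a b) :
    reverseNeg l ∈ nonnegWalks b a := by
  obtain ⟨hnonneg, hend⟩ := hl
  refine ⟨fun m => ?_, ?_⟩
  · simp only [reverseNeg, List.take_reverse, List.sum_reverse, List.length_map, ← List.map_drop,
      ← List.sum_neg]
    have := hnonneg (l.length - m)
    have := List.sum_take_add_sum_drop l (l.length - m)
    omega
  · simp only [reverseNeg, List.sum_reverse, ← List.sum_neg]
    omega

end Walks

section GeneratingFunctions

variable {S : Set ℤ}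

lemma weight_reverseNeg (l : List ℤ) : weight (reverseNeg l) = weight l := by
  simp [weight, reverseNeg, List.map_reverse, Function.comp_def]

lemma isPath_reverseNeg (hS : ∀ x, -x ∈ S ↔ x ∈ S) (l : List ℤ) :
    IsPath S (reverseNeg l) ↔ IsPath S l := by
  simpa [IsPath, reverseNeg, hS] using
    ((Equiv.neg ℤ).forall_congr_left (p := fun x => x ∈ l → -x ∈ S)).symm

lemma gf_nonnegWalks_comm (hS : ∀ x, -x ∈ S ↔ x ∈ S) (a b : ℤ) :
    gf S (nonnegWalks a b) = gf S (nonnegWalks b a) := by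
  have h : nonnegWalks a b = reverseNeg ⁻¹' nonnegWalks b a := by
    ext l
    refine ⟨reverseNeg_mem_nonnegWalks, fun h => ?_⟩
    simpa [reverseNeg_involutive l] using reverseNeg_mem_nonnegWalks h
  rw [h, gf_preimage reverseNeg_involutive weight_reverseNeg (isPath_reverseNeg hS)]

lemma gf_nonnegWalks_add_one (hS : S.Finite) (h0 : 0 ∉ S) (a b : ℤ) :
    gf S (nonnegWalks (a + 1) (b + 1)) =
      gf S (nonnegWalks a b) + gf S (firstPassages (a + 1)) * gf S (nonnegWalks 0 (b + 1)) := by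
  rw [nonnegWalks_add_one, gf_union hS h0 disjoint_nonnegWalks_image2, gf_image2_append hS h0
    fun _ hp _ _ _ hp' _ _ h => eq_of_append_eq_of_mem_firstPassages hp hp' h]

end GeneratingFunctions

def basketSteps : Set ℤ := {1, -1, 2, -2}

lemma basketSteps_finite : basketSteps.Finite := by
  simp [basketSteps]

lemma zero_notMem_basketSteps : 0 ∉ basketSteps := by
  simp [basketSteps]

lemma neg_mem_basketSteps (x : ℤ) : -x ∈ basketSteps ↔ x ∈ basketSteps := by
  simp only [basketSteps, Set.mem_insert_iff, Set.mem_singleton_iff]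
  omega

lemma gf_nonnegWalks_zero_zero :
    gf basketSteps (nonnegWalks 0 0) = 1 + X * gf basketSteps (nonnegWalks 1 0)
      + X ^ 2 * gf basketSteps (nonnegWalks 2 0) := by
  have hdecomp : ∀ l, IsPath basketSteps l → (l ∈ nonnegWalks 0 0 ↔
      l ∈ {[]} ∪ ((1 :: ·) '' nonnegWalks 1 0 ∪ (2 :: ·) '' nonnegWalks 2 0)) := by
    rintro (_ | ⟨s, l⟩) hl
    · simp [nonnegWalks]
    · have hs : s = 1 ∨ s = -1 ∨ s = 2 ∨ s = -2 := hl s List.mem_cons_self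
      simp only [cons_mem_nonnegWalks, zero_add, le_refl, true_and, Set.mem_union,
        Set.mem_image, List.cons.injEq]
      rcases hs with rfl | rfl | rfl | rfl <;> simp [nonnegWalks_eq_empty_of_neg_left]
  have h1 : (1 : ℤ) ∈ basketSteps := by simp [basketSteps]
  have h2 : (2 : ℤ) ∈ basketSteps := by simp [basketSteps]
  rw [gf_congr hdecomp, gf_union basketSteps_finite zero_notMem_basketSteps (by simp),
    gf_union basketSteps_finite zero_notMem_basketSteps ?_, gf_singleton (by simp [IsPath]),
    gf_image_cons basketSteps_finite zero_notMem_basketSteps h1,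
    gf_image_cons basketSteps_finite zero_notMem_basketSteps h2]
  · norm_num [weight, add_assoc]
  · exact Set.disjoint_left.2 (by rintro _ ⟨l, -, rfl⟩ ⟨l', -, h⟩; simp at h)

lemma gf_firstPassages_add_one {a : ℤ} (ha : 0 ≤ a) :
    gf basketSteps (firstPassages (a + 1)) = gf basketSteps (nonnegWalks a 0) * X
      + gf basketSteps (nonnegWalks a 1) * X ^ 2 := by
  have hdecomp : ∀ l, IsPath basketSteps l → (l ∈ firstPassages (a + 1) ↔
      l ∈ (· ++ [-1]) '' nonnegWalks a 0 ∪ (· ++ [-2]) '' nonnegWalks a 1) := by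
    intro l hl
    rcases List.eq_nil_or_concat' l with rfl | ⟨l, s, rfl⟩
    · simp [firstPassages]
      omega
    · have hs : s = 1 ∨ s = -1 ∨ s = 2 ∨ s = -2 := hl s (by simp)
      rw [concat_mem_firstPassages]
      rcases hs with rfl | rfl | rfl | rfl <;> simp [nonnegWalks_eq_empty_of_neg_right]
  rw [gf_congr hdecomp, gf_union basketSteps_finite zero_notMem_basketSteps ?_,
    gf_image_concat basketSteps_finite zero_notMem_basketSteps (by simp [basketSteps]),
    gf_image_concat basketSteps_finite zero_notMem_basketSteps (by simp [basketSteps])]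
  · norm_num
  · exact Set.disjoint_left.2 (by rintro _ ⟨l, -, rfl⟩ ⟨l', -, h⟩; simp at h)

lemma quartic_of_system {R : Type*} [CommRing R] {x E D G : R}
    (hE : E = 1 + x * (D * E) + x ^ 2 * (G * E)) (hD : D = E * x + D * E * x ^ 2)
    (hG : G = D * E * x + (E + D * (D * E)) * x ^ 2) :
    x ^ 8 * E ^ 4 - x ^ 4 * (1 + 2 * x ^ 2) * E ^ 3 + x ^ 2 * (3 + 2 * x ^ 2) * E ^ 2
      - (1 + 2 * x ^ 2) * E + 1 = 0 := by
  set u := 1 - x ^ 2 * E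
  linear_combination (-u ^ 2) * hE - (x ^ 2 * E * u ^ 2) * hG
    - (x * E * u + x ^ 3 * E ^ 2 * u + x ^ 4 * E ^ 2 * (D * u + x * E)) * hD

lemma basketGF_eq_gf : basketGF = gf basketSteps (nonnegWalks 0 0) := by
  ext n
  simp only [basketGF, gf, coeff_mk, ← Nat.card_coe_set_eq]
  congr 2
  refine congrArg Subtype (funext fun l => propext ?_)
  simp only [IsExcursion, Set.mem_inter_iff, nonnegWalks, pathsOfWeight, Set.mem_ofPred_eq,
    zero_add]
  tauto

end LatticePath

open LatticePath PowerSeries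

/-- The basket-ball excursion generating function satisfies
`t⁸E⁴ - t⁴(1+2t²)E³ + t²(3+2t²)E² - (1+2t²)E + 1 = 0`. -/
theorem basket_gf_eq :
    (PowerSeries.X : PowerSeries ℚ) ^ 8 * basketGF ^ 4
      - PowerSeries.X ^ 4 * (1 + 2 * PowerSeries.X ^ 2) * basketGF ^ 3
      + PowerSeries.X ^ 2 * (3 + 2 * PowerSeries.X ^ 2) * basketGF ^ 2
      - (1 + 2 * PowerSeries.X ^ 2) * basketGF + 1 = 0 := by
  have hS := basketSteps_finite
  have h0 := zero_notMem_basketSteps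
  set E := gf basketSteps (nonnegWalks 0 0)
  set D := gf basketSteps (firstPassages 1)
  set G := gf basketSteps (firstPassages 2)
  have h10 : gf basketSteps (nonnegWalks 1 0) = D * E := by
    simpa [nonnegWalks_eq_empty_of_neg_right] using gf_nonnegWalks_add_one hS h0 0 (-1)
  have h20 : gf basketSteps (nonnegWalks 2 0) = G * E := by
    simpa [nonnegWalks_eq_empty_of_neg_right] using gf_nonnegWalks_add_one hS h0 1 (-1)
  have h01 : gf basketSteps (nonnegWalks 0 1) = D * E := by
    rw [gf_nonnegWalks_comm neg_mem_basketSteps, h10]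
  have h11 : gf basketSteps (nonnegWalks 1 1) = E + D * (D * E) := by
    simpa [h01] using gf_nonnegWalks_add_one hS h0 0 0
  have hD : D = E * X + D * E * X ^ 2 := by
    simpa [h01] using gf_firstPassages_add_one (a := 0) le_rfl
  have hG : G = D * E * X + (E + D * (D * E)) * X ^ 2 := by
    simpa [h10, h11] using gf_firstPassages_add_one (a := 1) zero_le_one
  have hE := gf_nonnegWalks_zero_zero
  rw [h10, h20] at hE
  rw [basketGF_eq_gf]
  exact quartic_of_system hE hD hG
end

section
/- Let S ⊂ Z be a finite step set with max S = a, and let A^{(k)} be the (k+1)×(k+1) matrix with entry (i,j) equal to ω_{j-i} if j - i ∈ S and 0 otherwise, for 0 ≤ i,j ≤ k. Then the generating function E^{(k)} of excursions of height at most k equals F_k / F_{k+1}, where F_{k+1} = det(I - t A^{(k)}) and F_0 = 1. -/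
open scoped Classical

/-- Walks of length `n` with steps in `S` whose partial sums all lie in `[0, k]`. -/
noncomputable def bddWalkSet (S : Finset ℤ) (k n : ℕ) : Finset (Fin n → ℤ) :=
  (Fintype.piFinset fun _ : Fin n => S).filter fun f =>
    ∀ m : ℕ, 0 ≤ psum f m ∧ psum f m ≤ (k : ℤ)

/-- `E⁽ᵏ⁾`: the weighted generating function of excursions of height at most `k`. -/
noncomputable def bddExcursionGFW {K : Type*} [Field K] (S : Finset ℤ) (ω : ℤ → K)
    (k : ℕ) : PowerSeries K :=
  PowerSeries.mk fun n =>
    ∑ f ∈ (bddWalkSet S k n).filter (fun f => psum f n = 0), ∏ i, ω (f i)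

/-- The transfer matrix `A⁽ᵏ⁾` on levels `0, …, k`. -/
def transferMatrix {K : Type*} [Field K] (S : Finset ℤ) (ω : ℤ → K) (k : ℕ) :
    Matrix (Fin (k + 1)) (Fin (k + 1)) K :=
  Matrix.of fun i j => if ((j : ℤ) - (i : ℤ)) ∈ S then ω ((j : ℤ) - (i : ℤ)) else 0

/-- `F₀ = 1` and `F_{m+1} = det(1 - t A⁽ᵐ⁾)`. -/
noncomputable def Fdet {K : Type*} [Field K] (S : Finset ℤ) (ω : ℤ → K) :
    ℕ → PowerSeries K
  | 0 => 1
  | m + 1 =>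
      Matrix.det
        ((1 : Matrix (Fin (m + 1)) (Fin (m + 1)) (PowerSeries K)) -
          Matrix.of fun i j => PowerSeries.X * PowerSeries.C (transferMatrix S ω m i j))

/-! Splitting off the first step shows that `(Aⁿ)ᵢⱼ` is the weighted count of walks of length `n`
from level `i` to level `j` that stay in the strip `[0, k]`, so `E⁽ᵏ⁾` is the `(0, 0)` entry of
`∑ tⁿ Aⁿ = (1 - t A)⁻¹`. By the adjugate formula this entry is the `(0, 0)` minor of `1 - t A`
divided by `det (1 - t A) = F_{k+1}`; deleting level `0` leaves a translate of the strip
`[0, k - 1]`, so by translation invariance of the steps that minor is `F_k`. -/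

open PowerSeries

@[simp]
lemma psum_zero {n : ℕ} (f : Fin n → ℤ) : psum f 0 = 0 := by
  simp [psum]

lemma psum_cons_succ {n : ℕ} (s : ℤ) (g : Fin n → ℤ) (m : ℕ) :
    psum (Fin.cons s g) (m + 1) = s + psum g m := by
  simp [psum, Finset.sum_filter, Fin.sum_univ_succ]

lemma psum_fin_zero (f : Fin 0 → ℤ) (m : ℕ) : psum f m = 0 := by
  simp [psum]

noncomputable def bddPathSet (S : Finset ℤ) (k n : ℕ) (i j : ℤ) : Finset (Fin n → ℤ) :=
  (Fintype.piFinset fun _ : Fin n => S).filter fun f =>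
    (∀ m : ℕ, 0 ≤ i + psum f m ∧ i + psum f m ≤ k) ∧ i + psum f n = j

lemma cons_mem_bddPathSet {S : Finset ℤ} {k n : ℕ} {i j s : ℤ} {g : Fin n → ℤ} :
    Fin.cons s g ∈ bddPathSet S k (n + 1) i j ↔
      (0 ≤ i ∧ i ≤ k) ∧ s ∈ S ∧ g ∈ bddPathSet S k n (i + s) j := by
  simp only [bddPathSet, Finset.mem_filter, Fin.mem_piFinset_iff_zero_tail, Fin.cons_zero,
    Fin.tail_cons]
  rw [← Nat.and_forall_add_one]
  simp only [psum_zero, psum_cons_succ, add_zero, ← add_assoc]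
  tauto

lemma bddPathSet_eq_empty {S : Finset ℤ} {k n : ℕ} {i : ℤ} (hi : ¬(0 ≤ i ∧ i ≤ k)) (j : ℤ) :
    bddPathSet S k n i j = ∅ := by
  ext f
  simpa [bddPathSet] using fun _ h => absurd (by simpa using h 0) hi

lemma sum_bddPathSet_succ {M : Type*} [AddCommMonoid M] {S : Finset ℤ} {k n : ℕ} {i : ℤ}
    (hi : 0 ≤ i ∧ i ≤ k) (j : ℤ) (F : (Fin (n + 1) → ℤ) → M) :
    ∑ f ∈ bddPathSet S k (n + 1) i j, F f =
      ∑ s ∈ S, ∑ g ∈ bddPathSet S k n (i + s) j, F (Fin.cons s g) := by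
  rw [Finset.sum_sigma']
  refine Finset.sum_bij' (fun f _ => ⟨f 0, Fin.tail f⟩) (fun p _ => Fin.cons p.1 p.2)
    (fun f hf => ?_) (fun p hp => ?_) (fun f _ => Fin.cons_self_tail f) (fun p _ => by simp)
    (fun f _ => by rw [Fin.cons_self_tail])
  · rw [← Fin.cons_self_tail f, cons_mem_bddPathSet] at hf
    simpa using hf.2
  · simpa [cons_mem_bddPathSet, hi] using hp

noncomputable def bddPathWeight {K : Type*} [CommSemiring K] (S : Finset ℤ) (ω : ℤ → K) (k n : ℕ)
    (i j : ℤ) : K :=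
  ∑ f ∈ bddPathSet S k n i j, ∏ t, ω (f t)

lemma bddPathWeight_zero {K : Type*} [CommSemiring K] (S : Finset ℤ) (ω : ℤ → K) (k : ℕ) (i j : ℤ) :
    bddPathWeight S ω k 0 i j = if (0 ≤ i ∧ i ≤ k) ∧ i = j then 1 else 0 := by
  split_ifs with h
  · obtain ⟨hi, rfl⟩ := h
    simp [bddPathWeight, bddPathSet, psum_fin_zero, hi]
  · simp [bddPathWeight, bddPathSet, psum_fin_zero, h]

lemma bddPathWeight_succ {K : Type*} [CommSemiring K] {S : Finset ℤ} (ω : ℤ → K) {k : ℕ} (n : ℕ)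
    {i : ℤ} (hi : 0 ≤ i ∧ i ≤ k) (j : ℤ) :
    bddPathWeight S ω k (n + 1) i j = ∑ s ∈ S, ω s * bddPathWeight S ω k n (i + s) j := by
  simp [bddPathWeight, sum_bddPathSet_succ hi, Fin.prod_univ_succ, Finset.mul_sum]

lemma sum_fin_ite_natCast_eq {M : Type*} [AddCommMonoid M] {k : ℕ} {X : ℤ → M}
    (hX : ∀ x : ℤ, ¬(0 ≤ x ∧ x ≤ k) → X x = 0) (x : ℤ) :
    ∑ l : Fin (k + 1), (if (l : ℤ) = x then X l else 0) = X x := by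
  by_cases hx : 0 ≤ x ∧ x ≤ k
  · lift x to ℕ using hx.1
    have hxk : x < k + 1 := by omega
    rw [Finset.sum_eq_single_of_mem ⟨x, hxk⟩ (Finset.mem_univ _)]
    · simp
    · intro l _ hl
      rw [if_neg (fun h => hl (Fin.ext (by exact_mod_cast h)))]
  · rw [hX x hx]
    refine Finset.sum_eq_zero fun l _ => if_neg ?_
    rintro rfl
    exact hx ⟨l.val.cast_nonneg, by exact_mod_cast l.is_le⟩

lemma sum_transferMatrix_mul {K : Type*} [Field K] (S : Finset ℤ) (ω : ℤ → K) {k : ℕ}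
    {X : ℤ → K} (hX : ∀ x : ℤ, ¬(0 ≤ x ∧ x ≤ k) → X x = 0) (i : Fin (k + 1)) :
    ∑ l, transferMatrix S ω k i l * X l = ∑ s ∈ S, ω s * X (i + s) := by
  simp_rw [← sum_fin_ite_natCast_eq hX (i + _), Finset.mul_sum, mul_ite, mul_zero]
  rw [Finset.sum_comm]
  refine Finset.sum_congr rfl fun l _ => ?_
  simp_rw [eq_comm (a := (l : ℤ)), ← eq_sub_iff_add_eq']
  rw [Finset.sum_ite_eq']
  simp [transferMatrix, ite_mul]

lemma transferMatrix_pow_apply {K : Type*} [Field K] (S : Finset ℤ) (ω : ℤ → K) (k n : ℕ)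
    (i j : Fin (k + 1)) :
    (transferMatrix S ω k ^ n) i j = bddPathWeight S ω k n i j := by
  induction n generalizing i with
  | zero =>
    simp [bddPathWeight_zero, Matrix.one_apply, Fin.ext_iff, Fin.is_le]
  | succ n ih =>
    have hi : 0 ≤ (i : ℤ) ∧ (i : ℤ) ≤ k := ⟨i.val.cast_nonneg, by exact_mod_cast i.is_le⟩
    rw [pow_succ', Matrix.mul_apply, bddPathWeight_succ ω n hi,
      ← sum_transferMatrix_mul S ω (X := fun x => bddPathWeight S ω k n x j)]
    · simp only [ih]
    · intro x hx
      simp [bddPathWeight, bddPathSet_eq_empty hx]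

namespace Matrix
variable {ι R : Type*} [Fintype ι] [DecidableEq ι]

noncomputable def oneSubXMul [Ring R] (A : Matrix ι ι R) : Matrix ι ι R⟦X⟧ :=
  1 - of fun i j => X * C (A i j)

def powSeries [Semiring R] (A : Matrix ι ι R) : Matrix ι ι R⟦X⟧ :=
  of fun i j => mk fun n => (A ^ n) i j

lemma powSeries_eq_one_add [Semiring R] (A : Matrix ι ι R) :
    powSeries A = 1 + (of fun i j => X * C (A i j)) * powSeries A := by
  ext i j (_ | n)
  · by_cases h : i = j <;> simp [powSeries, mul_apply, one_apply, mul_assoc, h]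
  · simp [powSeries, mul_apply, one_apply, mul_assoc, coeff_succ_X_mul, pow_succ', apply_ite]

lemma oneSubXMul_mul_powSeries [Ring R] (A : Matrix ι ι R) : oneSubXMul A * powSeries A = 1 := by
  rw [oneSubXMul, sub_mul, one_mul, sub_eq_iff_eq_add, ← powSeries_eq_one_add]

lemma adjugate_eq_det_smul_of_mul_eq_one [CommRing R] {M B : Matrix ι ι R} (h : M * B = 1) :
    M.adjugate = M.det • B := by
  calc M.adjugate = M.adjugate * (M * B) := by rw [h, mul_one]
    _ = M.det • B := by rw [← mul_assoc, adjugate_mul, smul_mul, one_mul]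

end Matrix

lemma transferMatrix_succ_succ {K : Type*} [Field K] (S : Finset ℤ) (ω : ℤ → K) (k : ℕ)
    (i j : Fin (k + 1)) :
    transferMatrix S ω (k + 1) i.succ j.succ = transferMatrix S ω k i j := by
  simp [transferMatrix]

lemma det_submatrix_succ_oneSubXMul_transferMatrix {K : Type*} [Field K] (S : Finset ℤ)
    (ω : ℤ → K) (k : ℕ) :
    ((Matrix.oneSubXMul (transferMatrix S ω k)).submatrix Fin.succ Fin.succ).det =
      Fdet S ω k := by
  cases k with
  | zero => simp [Fdet]
  | succ k =>
    congr 1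
    ext i j : 1
    simp [Matrix.oneSubXMul, Matrix.one_apply, transferMatrix_succ_succ]

lemma bddExcursionGFW_eq_powSeries_apply {K : Type*} [Field K] (S : Finset ℤ) (ω : ℤ → K)
    (k : ℕ) : bddExcursionGFW S ω k = Matrix.powSeries (transferMatrix S ω k) 0 0 := by
  ext n
  have hset : (bddWalkSet S k n).filter (fun f => psum f n = 0) = bddPathSet S k n 0 0 := by
    ext f
    simp [bddWalkSet, bddPathSet, and_assoc]
  simp [bddExcursionGFW, Matrix.powSeries, transferMatrix_pow_apply, bddPathWeight, hset]

theorem bdd_excursion_det_general {K : Type*} [Field K] (S : Finset ℤ) (ω : ℤ → K) (k : ℕ) :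
    bddExcursionGFW S ω k * Fdet S ω (k + 1) = Fdet S ω k := by
  set M := Matrix.oneSubXMul (transferMatrix S ω k)
  have hadj : M.adjugate = M.det • Matrix.powSeries (transferMatrix S ω k) :=
    Matrix.adjugate_eq_det_smul_of_mul_eq_one (Matrix.oneSubXMul_mul_powSeries _)
  calc bddExcursionGFW S ω k * Fdet S ω (k + 1)
      = M.det * Matrix.powSeries (transferMatrix S ω k) 0 0 := by
        rw [bddExcursionGFW_eq_powSeries_apply, mul_comm]; rfl
    _ = M.adjugate 0 0 := by rw [hadj, Matrix.smul_apply, smul_eq_mul]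
    _ = Fdet S ω k := by
        rw [Matrix.adjugate_fin_succ_eq_det_submatrix]
        simpa using det_submatrix_succ_oneSubXMul_transferMatrix S ω k

/-- The generating function of excursions of height at most `k` is `F_k / F_{k+1}`
where `F_{k+1} = det(1 - t A⁽ᵏ⁾)` and `F₀ = 1`. -/
theorem bdd_excursion_det {K : Type*} [Field K] (S : Finset ℤ) (ω : ℤ → K)
    (a : ℤ) (haS : a ∈ S) (hmax : ∀ s ∈ S, s ≤ a) (k : ℕ) :
    bddExcursionGFW S ω k * Fdet S ω (k + 1) = Fdet S ω k :=
  bdd_excursion_det_general S ω k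
end

section
/- For n = 4 variables and a = 2: ∑_{k≥0} s_{(k,k)}(u_1,u_2,u_3,u_4) z^k = (1 - e_4 z^2) / ∏_{1≤i<j≤4} (1 - z u_i u_j), where s_{(k,k)} is the Schur polynomial of the rectangular partition (k,k) and e_4 = u_1 u_2 u_3 u_4. -/
/-! Multiplying by the Vandermonde determinant `a_δ`, it suffices to find the generating function
of the numerators `a_{(k+3,k+2,1,0)}`. Laplace expansion along the first two columns writes each as
`∑_{i<j} ± (u_i u_j)^(k+2) (u_i - u_j) (u_k - u_l)` with `{k, l}` the complementary pair, so the
generating function is a combination of six geometric series in `z u_i u_j`. Multiplying by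
`∏_{i<j} (1 - z u_i u_j)` clears all denominators and leaves a polynomial identity in `z`. -/

/-- The alternant `a_μ = det(u_i^{μ_j})` in `n` variables. -/
noncomputable def alternant (n : ℕ) (μ : Fin n → ℕ) : MvPolynomial (Fin n) ℚ :=
  Matrix.det (Matrix.of fun i j => MvPolynomial.X i ^ μ j)

lemma PowerSeries.mk_pow_mul_one_sub_C_mul_X {R : Type*} [CommRing R] (t : R) :
    (PowerSeries.mk fun k => t ^ k) * (1 - PowerSeries.C t * PowerSeries.X) = 1 := by
  simpa [PowerSeries.rescale_mk, PowerSeries.rescale_X] using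
    congrArg (PowerSeries.rescale t) (PowerSeries.mk_one_mul_one_sub_eq_one R)

lemma prod_powersetCard_two_fin_four {M N : Type*} [CommMonoid M] [CommMonoid N] (f : N → M)
    (x : Fin 4 → N) :
    ∏ I ∈ (Finset.univ : Finset (Fin 4)).powersetCard 2, f (∏ i ∈ I, x i) =
      f (x 0 * x 1) * f (x 0 * x 2) * f (x 0 * x 3) * f (x 1 * x 2) * f (x 1 * x 3) *
        f (x 2 * x 3) := by
  rw [show (Finset.univ : Finset (Fin 4)).powersetCard 2 =
      {{0, 1}, {0, 2}, {0, 3}, {1, 2}, {1, 3}, {2, 3}} by decide]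
  simp +decide [mul_assoc]

lemma rect_partial_fractions {S : Type*} [CommRing S] (x : Fin 4 → S) (z : S)
    (g : Fin 4 → Fin 4 → S) (hg : ∀ i j, g i j * (1 - x i * x j * z) = 1) :
    ((x 0 * x 1) ^ 2 * (x 0 - x 1) * (x 2 - x 3) * g 0 1
      - (x 0 * x 2) ^ 2 * (x 0 - x 2) * (x 1 - x 3) * g 0 2
      + (x 0 * x 3) ^ 2 * (x 0 - x 3) * (x 1 - x 2) * g 0 3
      + (x 1 * x 2) ^ 2 * (x 1 - x 2) * (x 0 - x 3) * g 1 2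
      - (x 1 * x 3) ^ 2 * (x 1 - x 3) * (x 0 - x 2) * g 1 3
      + (x 2 * x 3) ^ 2 * (x 2 - x 3) * (x 0 - x 1) * g 2 3) *
      ((1 - x 0 * x 1 * z) * (1 - x 0 * x 2 * z) * (1 - x 0 * x 3 * z) *
        (1 - x 1 * x 2 * z) * (1 - x 1 * x 3 * z) * (1 - x 2 * x 3 * z)) =
    (1 - x 0 * x 1 * x 2 * x 3 * z ^ 2) *
      ((x 0 - x 1) * (x 0 - x 2) * (x 0 - x 3) * (x 1 - x 2) * (x 1 - x 3) * (x 2 - x 3)) := by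
  -- each `hg i j` clears the denominator `u i j`; what remains is a polynomial identity in `z`
  set u : Fin 4 → Fin 4 → S := fun i j => 1 - x i * x j * z
  change _ * (u 0 1 * u 0 2 * u 0 3 * u 1 2 * u 1 3 * u 2 3) = _
  linear_combination
    (x 0 * x 1) ^ 2 * (x 0 - x 1) * (x 2 - x 3) * (u 0 2 * u 0 3 * u 1 2 * u 1 3 * u 2 3) * hg 0 1
    - (x 0 * x 2) ^ 2 * (x 0 - x 2) * (x 1 - x 3) * (u 0 1 * u 0 3 * u 1 2 * u 1 3 * u 2 3) * hg 0 2
    + (x 0 * x 3) ^ 2 * (x 0 - x 3) * (x 1 - x 2) * (u 0 1 * u 0 2 * u 1 2 * u 1 3 * u 2 3) * hg 0 3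
    + (x 1 * x 2) ^ 2 * (x 1 - x 2) * (x 0 - x 3) * (u 0 1 * u 0 2 * u 0 3 * u 1 3 * u 2 3) * hg 1 2
    - (x 1 * x 3) ^ 2 * (x 1 - x 3) * (x 0 - x 2) * (u 0 1 * u 0 2 * u 0 3 * u 1 2 * u 2 3) * hg 1 3
    + (x 2 * x 3) ^ 2 * (x 2 - x 3) * (x 0 - x 1) * (u 0 1 * u 0 2 * u 0 3 * u 1 2 * u 1 3) * hg 2 3

open PowerSeries in
lemma rect_gf_mul_prod {R : Type*} [CommRing R] (x : Fin 4 → R) :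
    (mk fun k =>
        (x 0 * x 1) ^ (k + 2) * (x 0 - x 1) * (x 2 - x 3)
      - (x 0 * x 2) ^ (k + 2) * (x 0 - x 2) * (x 1 - x 3)
      + (x 0 * x 3) ^ (k + 2) * (x 0 - x 3) * (x 1 - x 2)
      + (x 1 * x 2) ^ (k + 2) * (x 1 - x 2) * (x 0 - x 3)
      - (x 1 * x 3) ^ (k + 2) * (x 1 - x 3) * (x 0 - x 2)
      + (x 2 * x 3) ^ (k + 2) * (x 2 - x 3) * (x 0 - x 1)) *
      ((1 - C (x 0 * x 1) * X) * (1 - C (x 0 * x 2) * X) * (1 - C (x 0 * x 3) * X) *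
        (1 - C (x 1 * x 2) * X) * (1 - C (x 1 * x 3) * X) * (1 - C (x 2 * x 3) * X)) =
    (1 - C (x 0 * x 1 * x 2 * x 3) * X ^ 2) *
      C ((x 0 - x 1) * (x 0 - x 2) * (x 0 - x 3) * (x 1 - x 2) * (x 1 - x 3) * (x 2 - x 3)) := by
  set g : Fin 4 → Fin 4 → R⟦X⟧ := fun i j => mk fun k => (x i * x j) ^ k
  have hg i j : g i j * (1 - C (x i) * C (x j) * X) = 1 := by
    rw [← map_mul]
    exact mk_pow_mul_one_sub_C_mul_X _
  have hmk : (mk fun k =>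
        (x 0 * x 1) ^ (k + 2) * (x 0 - x 1) * (x 2 - x 3)
      - (x 0 * x 2) ^ (k + 2) * (x 0 - x 2) * (x 1 - x 3)
      + (x 0 * x 3) ^ (k + 2) * (x 0 - x 3) * (x 1 - x 2)
      + (x 1 * x 2) ^ (k + 2) * (x 1 - x 2) * (x 0 - x 3)
      - (x 1 * x 3) ^ (k + 2) * (x 1 - x 3) * (x 0 - x 2)
      + (x 2 * x 3) ^ (k + 2) * (x 2 - x 3) * (x 0 - x 1)) =
      C ((x 0 * x 1) ^ 2 * (x 0 - x 1) * (x 2 - x 3)) * g 0 1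
      - C ((x 0 * x 2) ^ 2 * (x 0 - x 2) * (x 1 - x 3)) * g 0 2
      + C ((x 0 * x 3) ^ 2 * (x 0 - x 3) * (x 1 - x 2)) * g 0 3
      + C ((x 1 * x 2) ^ 2 * (x 1 - x 2) * (x 0 - x 3)) * g 1 2
      - C ((x 1 * x 3) ^ 2 * (x 1 - x 3) * (x 0 - x 2)) * g 1 3
      + C ((x 2 * x 3) ^ 2 * (x 2 - x 3) * (x 0 - x 1)) * g 2 3 := by
    ext k
    simp only [coeff_mk, map_add, map_sub, coeff_C_mul, g]
    ring
  rw [hmk]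
  simp only [map_mul, map_sub, map_pow]
  exact rect_partial_fractions (fun i => C (x i)) X g hg

open MvPolynomial

lemma alternant_four_laplace (p q : ℕ) : alternant 4 ![p, q, 1, 0] =
      (X 0 ^ p * X 1 ^ q - X 0 ^ q * X 1 ^ p) * (X 2 - X 3)
    - (X 0 ^ p * X 2 ^ q - X 0 ^ q * X 2 ^ p) * (X 1 - X 3)
    + (X 0 ^ p * X 3 ^ q - X 0 ^ q * X 3 ^ p) * (X 1 - X 2)
    + (X 1 ^ p * X 2 ^ q - X 1 ^ q * X 2 ^ p) * (X 0 - X 3)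
    - (X 1 ^ p * X 3 ^ q - X 1 ^ q * X 3 ^ p) * (X 0 - X 2)
    + (X 2 ^ p * X 3 ^ q - X 2 ^ q * X 3 ^ p) * (X 0 - X 1) := by
  rw [alternant, Matrix.det_succ_column_zero, Fin.sum_univ_four]
  simp [Matrix.det_fin_three, Matrix.submatrix_apply, Fin.succAbove, Fin.lt_def]
  ring

lemma alternant_vandermonde_four : alternant 4 ![3, 2, 1, 0] =
    (X 0 - X 1) * (X 0 - X 2) * (X 0 - X 3) * (X 1 - X 2) * (X 1 - X 3) * (X 2 - X 3) := by
  rw [alternant_four_laplace]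
  ring

lemma alternant_vandermonde_four_ne_zero : alternant 4 ![3, 2, 1, 0] ≠ 0 := by
  simp [alternant_vandermonde_four, sub_eq_zero, X_inj]

lemma alternant_rect_four (k : ℕ) : alternant 4 ![k + 3, k + 2, 1, 0] =
      (X 0 * X 1) ^ (k + 2) * (X 0 - X 1) * (X 2 - X 3)
    - (X 0 * X 2) ^ (k + 2) * (X 0 - X 2) * (X 1 - X 3)
    + (X 0 * X 3) ^ (k + 2) * (X 0 - X 3) * (X 1 - X 2)
    + (X 1 * X 2) ^ (k + 2) * (X 1 - X 2) * (X 0 - X 3)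
    - (X 1 * X 3) ^ (k + 2) * (X 1 - X 3) * (X 0 - X 2)
    + (X 2 * X 3) ^ (k + 2) * (X 2 - X 3) * (X 0 - X 1) := by
  rw [alternant_four_laplace]
  ring

/-- For `n = 4` variables and `a = 2`: if `s k` is the Schur polynomial of the
rectangular partition `(k,k)` (defined by the bialternant formula
`s_λ · a_δ = a_{λ+δ}` with `δ = (3,2,1,0)`), then
`∑_{k≥0} s_{(k,k)} z^k = (1 - e₄ z²) / ∏_{i<j} (1 - z uᵢuⱼ)`. -/
theorem rect_schur_gf_four (s : ℕ → MvPolynomial (Fin 4) ℚ)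
    (hs : ∀ k : ℕ, s k * alternant 4 ![3, 2, 1, 0] = alternant 4 ![k + 3, k + 2, 1, 0]) :
    (PowerSeries.mk fun k => s k) *
        ∏ I ∈ (Finset.univ : Finset (Fin 4)).powersetCard 2,
          (1 - PowerSeries.C (∏ i ∈ I, MvPolynomial.X i) *
            PowerSeries.X) =
      1 - PowerSeries.C
            (MvPolynomial.X 0 * MvPolynomial.X 1 * MvPolynomial.X 2 * MvPolynomial.X 3) *
          PowerSeries.X ^ 2 := by
  have hδ : PowerSeries.C (alternant 4 ![3, 2, 1, 0]) ≠ 0 :=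
    (map_ne_zero_iff _ PowerSeries.C_injective).2 alternant_vandermonde_four_ne_zero
  have hgf : (PowerSeries.mk fun k => s k) * PowerSeries.C (alternant 4 ![3, 2, 1, 0]) =
      PowerSeries.mk fun k => alternant 4 ![k + 3, k + 2, 1, 0] := by
    ext k
    simp [hs]
  apply mul_right_cancel₀ hδ
  rw [mul_right_comm, hgf,
    prod_powersetCard_two_fin_four (fun t => 1 - PowerSeries.C t * PowerSeries.X),
    alternant_vandermonde_four]
  -- only after `a_δ` is gone: `alternant_rect_four 0` would also match `![3, 2, 1, 0]`
  simp only [alternant_rect_four]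
  exact rect_gf_mul_prod (R := MvPolynomial (Fin 4) ℚ) X
end

section
/- Let 1 ≤ a ≤ n and u_1,...,u_n be variables. Define Q(z) = ∏_{|I|=a} (1 - z u_I). Then Q(z) · ∑_{k≥0} s_{k^a} z^k is a polynomial in z of degree (n choose a) - n, where s_{k^a} is the Schur polynomial of the a×k rectangular partition in u_1,...,u_n. -/
open Finset Polynomial

theorem Nat.self_le_choose {n a : ℕ} (ha : 0 < a) (han : a < n) : n ≤ n.choose a := by
  induction n with
  | zero => omega
  | succ n ih =>
    obtain ⟨b, rfl⟩ : ∃ b, a = b + 1 := ⟨a - 1, by omega⟩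
    rw [Nat.choose_succ_succ']
    rcases Nat.lt_or_ge (b + 1) n with h | h
    · have := ih h
      have := Nat.choose_pos (show b ≤ n by omega)
      omega
    · obtain rfl : n = b + 1 := by omega
      simp

theorem Polynomial.sum_range_coeff_mul_sum_zpow_eq_zero {K ι : Type*} [Field K] (q : K[X])
    (s : Finset ι) (w r : ι → K) (hr : ∀ x ∈ s, r x ≠ 0) (hq : ∀ x ∈ s, q.eval (r x)⁻¹ = 0)
    (m : ℤ) {L : ℕ} (hL : q.natDegree < L) :
    ∑ j ∈ range L, q.coeff j * ∑ x ∈ s, w x * r x ^ (m - j) = 0 := by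
  have hzpow : ∀ x ∈ s, ∀ j : ℕ, r x ^ (m - j) = r x ^ m * (r x)⁻¹ ^ j := fun x hx j => by
    rw [zpow_sub₀ (hr x hx), zpow_natCast, div_eq_mul_inv, inv_pow]
  calc ∑ j ∈ range L, q.coeff j * ∑ x ∈ s, w x * r x ^ (m - j)
      = ∑ x ∈ s, w x * r x ^ m * q.eval (r x)⁻¹ := by
        simp_rw [eval_eq_sum_range' hL, Finset.mul_sum, sum_comm (s := range L)]
        refine sum_congr rfl fun x hx => sum_congr rfl fun j _ => ?_
        rw [hzpow x hx]
        ring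
    _ = 0 := sum_eq_zero fun x hx => by rw [hq x hx, mul_zero]

theorem PowerSeries.exists_coe_eq_natDegree_eq {R : Type*} [CommRing R] (f : PowerSeries R)
    (D : ℕ) (hf : ∀ m, D < m → coeff m f = 0) (hD : coeff D f ≠ 0) :
    ∃ p : R[X], (p : PowerSeries R) = f ∧ p.natDegree = D := by
  refine ⟨trunc (D + 1) f, ext fun m => ?_, ?_⟩
  · rw [Polynomial.coeff_coe, coeff_trunc]
    split_ifs with hm
    · rfl
    · exact (hf m (by omega)).symm
  · refine natDegree_eq_of_le_of_coeff_ne_zero (Nat.lt_succ_iff.mp (natDegree_trunc_lt f D)) ?_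
    rwa [coeff_trunc, if_pos D.lt_succ_self]

theorem Matrix.det_of_zpow_ne_zero {K : Type*} [Field K] {n : ℕ} {u : Fin n → K}
    (hu : Function.Injective u) (hu0 : ∀ i, u i ≠ 0) {μ : Fin n → ℤ} (hμ : Function.Injective μ)
    (c : ℤ) (hμc : ∀ j, c ≤ μ j ∧ μ j < c + n) :
    (Matrix.of fun i j => u i ^ μ j).det ≠ 0 := by
  set ρ : Fin n → Fin n := fun j => ⟨(μ j - c).toNat, by have := hμc j; omega⟩
  have hρ : Function.Injective ρ := fun j j' h => hμ <| by
    have := congrArg Fin.val h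
    have := hμc j
    have := hμc j'
    simp only [ρ] at *
    omega
  set e := Equiv.ofBijective ρ hρ.bijective_of_finite
  have hM : (Matrix.of fun i j => u i ^ μ j) =
      Matrix.of fun i j => u i ^ c * (Matrix.vandermonde u).submatrix id e i j := by
    ext i j
    have : μ j = c + ((ρ j : ℕ) : ℤ) := by have := hμc j; simp only [ρ]; omega
    simp [this, zpow_add₀ (hu0 i), e]
  rw [hM, det_mul_column, det_permute']
  refine mul_ne_zero (prod_ne_zero_iff.mpr fun i _ => zpow_ne_zero _ (hu0 i))
    (mul_ne_zero ?_ (det_vandermonde_ne_zero_iff.mpr hu))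
  rcases Int.units_eq_one_or (Equiv.Perm.sign e) with h | h <;> simp [h]

section Rectangle

variable {R K : Type*} [CommRing R] [Field K] {n : ℕ}

noncomputable def rectPoly (u : Fin n → R) (a : ℕ) : R[X] :=
  ∏ I ∈ (univ : Finset (Fin n)).powersetCard a, (1 - C (∏ i ∈ I, u i) * X)

theorem rectPoly_map {S : Type*} [CommRing S] (f : R →+* S) (u : Fin n → R) (a : ℕ) :
    (rectPoly u a).map f = rectPoly (f ∘ u) a := by
  simp [rectPoly, Polynomial.map_prod, map_prod]

theorem rectPoly_coe (u : Fin n → R) (a : ℕ) :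
    (rectPoly u a : PowerSeries R) =
      ∏ I ∈ (univ : Finset (Fin n)).powersetCard a,
        (1 - PowerSeries.C (∏ i ∈ I, u i) * PowerSeries.X) := by
  rw [rectPoly, ← coeToPowerSeries.ringHom_apply, map_prod]
  simp only [map_sub, map_one, map_mul, coeToPowerSeries.ringHom_apply, coe_C, coe_X]

theorem natDegree_rectPoly [IsDomain R] {u : Fin n → R} (hu0 : ∀ i, u i ≠ 0) (a : ℕ) :
    (rectPoly u a).natDegree = n.choose a := by
  have hfactor : ∀ I : Finset (Fin n), (1 - C (∏ i ∈ I, u i) * X).natDegree = 1 := fun I => by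
    rw [sub_eq_neg_add, ← C_1, ← neg_mul, ← C_neg]
    exact natDegree_linear (neg_ne_zero.mpr (prod_ne_zero_iff.mpr fun i _ => hu0 i))
  rw [rectPoly, natDegree_prod _ _ fun I _ =>
    ne_zero_of_natDegree_gt (n := 0) (by rw [hfactor I]; exact one_pos)]
  simp only [hfactor, sum_const, card_powersetCard, card_univ, Fintype.card_fin, smul_eq_mul,
    mul_one]

theorem coeff_zero_rectPoly (u : Fin n → R) (a : ℕ) : (rectPoly u a).coeff 0 = 1 := by
  simp [rectPoly, coeff_zero_eq_eval_zero, eval_prod]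

theorem eval_rectPoly_inv_eq_zero {u : Fin n → K} {a : ℕ} {I : Finset (Fin n)}
    (hI : I ∈ (univ : Finset (Fin n)).powersetCard a) (hI0 : ∏ i ∈ I, u i ≠ 0) :
    (rectPoly u a).eval (∏ i ∈ I, u i)⁻¹ = 0 := by
  rw [rectPoly, eval_prod]
  refine prod_eq_zero hI ?_
  rw [eval_sub, eval_one, eval_mul, eval_C, eval_X, mul_inv_cancel₀ hI0, sub_self]

def rectExponent (n a : ℕ) (t : ℤ) (j : Fin n) : ℤ :=
  (if (j : ℕ) < a then t else 0) + ((n : ℤ) - 1 - j)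

noncomputable def rectAlternant (u : Fin n → K) (a : ℕ) (t : ℤ) : K :=
  (Matrix.of fun i j => u i ^ rectExponent n a t j).det

theorem rectAlternant_eq_sum {u : Fin n → K} (hu0 : ∀ i, u i ≠ 0) (a : ℕ) (t : ℤ) :
    rectAlternant u a t = ∑ σ : Equiv.Perm (Fin n),
      ((Equiv.Perm.sign σ : ℤ) * ∏ j, u (σ j) ^ ((n : ℤ) - 1 - j)) *
        (∏ i ∈ ({j : Fin n | (j : ℕ) < a} : Finset (Fin n)).map σ.toEmbedding, u i) ^ t := by
  rw [rectAlternant, Matrix.det_apply']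
  refine sum_congr rfl fun σ _ => ?_
  have hrow : ∀ j, u (σ j) ^ rectExponent n a t j =
      (if (j : ℕ) < a then u (σ j) ^ t else 1) * u (σ j) ^ ((n : ℤ) - 1 - j) := fun j => by
    rw [rectExponent, zpow_add₀ (hu0 _)]
    split_ifs <;> simp
  simp only [Matrix.of_apply, hrow, prod_mul_distrib, ← prod_filter, prod_map,
    Equiv.coe_toEmbedding, prod_zpow]
  ring

theorem sum_range_coeff_rectPoly_mul_rectAlternant {u : Fin n → K} (hu0 : ∀ i, u i ≠ 0)
    {a : ℕ} (han : a ≤ n) (m : ℤ) {L : ℕ} (hL : n.choose a < L) :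
    ∑ j ∈ range L, (rectPoly u a).coeff j * rectAlternant u a (m - j) = 0 := by
  simp_rw [rectAlternant_eq_sum hu0]
  refine sum_range_coeff_mul_sum_zpow_eq_zero _ _ _ _ (fun σ _ => ?_) (fun σ _ => ?_) m
    (by rwa [natDegree_rectPoly hu0])
  · exact prod_ne_zero_iff.mpr fun i _ => hu0 i
  · refine eval_rectPoly_inv_eq_zero ?_ (prod_ne_zero_iff.mpr fun i _ => hu0 i)
    rw [mem_powersetCard_univ, card_map, Fin.card_filter_val_lt, min_eq_right han]

theorem rectAlternant_eq_zero (u : Fin n → K) {a : ℕ} (ha : 0 < a) (han : a < n) {t : ℤ}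
    (ht : -(n : ℤ) < t) (ht' : t < 0) : rectAlternant u a t = 0 := by
  obtain ⟨r, rfl⟩ : ∃ r : ℕ, t = -r := ⟨(-t).toNat, by omega⟩
  -- column `j` (inside the rectangle) and column `j + r` (outside it) carry the same exponent
  set j := min (a - 1) (n - 1 - r)
  refine Matrix.det_zero_of_column_eq (i := ⟨j, by omega⟩) (j := ⟨j + r, by omega⟩)
    (by simp only [ne_eq, Fin.mk.injEq]; omega) fun i => ?_
  simp only [Matrix.of_apply, rectExponent]
  rw [if_pos (by omega), if_neg (by omega)]
  congr 1
  push_cast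
  ring

theorem rectAlternant_zero_ne_zero {u : Fin n → K} (hu : Function.Injective u)
    (hu0 : ∀ i, u i ≠ 0) (a : ℕ) : rectAlternant u a 0 ≠ 0 :=
  Matrix.det_of_zpow_ne_zero hu hu0 (fun j j' h => Fin.ext <| by simp [rectExponent] at h; omega) 0
    fun j => by simp only [rectExponent]; omega

theorem rectAlternant_neg_ne_zero {u : Fin n → K} (hu : Function.Injective u)
    (hu0 : ∀ i, u i ≠ 0) {a : ℕ} (han : a ≤ n) : rectAlternant u a (-n) ≠ 0 :=
  Matrix.det_of_zpow_ne_zero hu hu0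
    (fun j j' h => Fin.ext <| by simp only [rectExponent] at h; split_ifs at h <;> omega) (-a)
    fun j => by simp only [rectExponent]; split_ifs <;> omega

noncomputable def rectSeries (u : Fin n → K) (a : ℕ) : PowerSeries K :=
  rectPoly u a * PowerSeries.mk fun k => rectAlternant u a k

theorem coeff_rectSeries (u : Fin n → K) (a m : ℕ) :
    PowerSeries.coeff m (rectSeries u a) =
      ∑ j ∈ range (m + 1), (rectPoly u a).coeff j * rectAlternant u a (m - j) := by
  rw [rectSeries, PowerSeries.coeff_mul, Nat.sum_antidiagonal_eq_sum_range_succ_mk]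
  refine sum_congr rfl fun j hj => ?_
  rw [Polynomial.coeff_coe, PowerSeries.coeff_mk, Nat.cast_sub (by simp at hj; omega)]

theorem coeff_rectSeries_eq_neg_sum_Ioc {u : Fin n → K} (hu0 : ∀ i, u i ≠ 0) {a : ℕ}
    (han : a ≤ n) (m : ℕ) :
    PowerSeries.coeff m (rectSeries u a) =
      -∑ j ∈ Ioc m (n.choose a), (rectPoly u a).coeff j * rectAlternant u a (m - j) := by
  have htail : ∑ j ∈ Ico (m + 1) (m + n.choose a + 1),
        (rectPoly u a).coeff j * rectAlternant u a (m - j) =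
      ∑ j ∈ Ioc m (n.choose a), (rectPoly u a).coeff j * rectAlternant u a (m - j) := by
    refine (sum_subset (fun j hj => by simp at hj ⊢; omega) fun j hj hj' => ?_).symm
    rw [coeff_eq_zero_of_natDegree_lt (by simp at hj hj'; rw [natDegree_rectPoly hu0]; omega),
      zero_mul]
  rw [coeff_rectSeries, ← htail, eq_neg_iff_add_eq_zero, sum_range_add_sum_Ico _ (by omega)]
  exact sum_range_coeff_rectPoly_mul_rectAlternant hu0 han m (by omega)

theorem coeff_rectSeries_eq_zero {u : Fin n → K} (hu0 : ∀ i, u i ≠ 0) {a : ℕ} (ha : 0 < a)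
    (han : a ≤ n) {m : ℕ} (hm : n.choose a - n < m) :
    PowerSeries.coeff m (rectSeries u a) = 0 := by
  rw [coeff_rectSeries_eq_neg_sum_Ioc hu0 han, neg_eq_zero]
  rcases han.lt_or_eq with han | rfl
  · refine sum_eq_zero fun j hj => ?_
    rw [mem_Ioc] at hj
    rw [rectAlternant_eq_zero u ha han (by omega) (by omega), mul_zero]
  · rw [Nat.choose_self, Ioc_eq_empty (by omega), sum_empty]

theorem coeff_rectSeries_ne_zero {u : Fin n → K} (hu : Function.Injective u)
    (hu0 : ∀ i, u i ≠ 0) {a : ℕ} (ha : 0 < a) (han : a ≤ n) :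
    PowerSeries.coeff (n.choose a - n) (rectSeries u a) ≠ 0 := by
  rcases han.lt_or_eq with han' | rfl
  · have hn := Nat.self_le_choose ha han'
    rw [coeff_rectSeries_eq_neg_sum_Ioc hu0 han, neg_ne_zero,
      sum_eq_single_of_mem (n.choose a) (by simp; omega) fun j hj hjN => by
        rw [mem_Ioc] at hj
        rw [rectAlternant_eq_zero u ha han' (by omega) (by omega), mul_zero]]
    refine mul_ne_zero ?_ ?_
    · rw [← natDegree_rectPoly hu0, coeff_natDegree, leadingCoeff_ne_zero]
      exact ne_zero_of_natDegree_gt (n := 0) <| by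
        rw [natDegree_rectPoly hu0]; exact Nat.choose_pos han
    · convert rectAlternant_neg_ne_zero hu hu0 han using 2
      omega
  · rw [Nat.choose_self, Nat.sub_eq_zero_of_le ha, coeff_rectSeries, sum_range_one,
      coeff_zero_rectPoly, one_mul]
    exact rectAlternant_zero_ne_zero hu hu0 a

theorem coeff_rectSeries_comp (f : R →+* K) (u : Fin n → R) (a : ℕ) {s : ℕ → R}
    (hs : ∀ k : ℕ, f (s k) * rectAlternant (f ∘ u) a 0 = rectAlternant (f ∘ u) a k) (m : ℕ) :
    PowerSeries.coeff m (rectSeries (f ∘ u) a) =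
      f (PowerSeries.coeff m ((rectPoly u a : PowerSeries R) * PowerSeries.mk s)) *
        rectAlternant (f ∘ u) a 0 := by
  rw [coeff_rectSeries, PowerSeries.coeff_mul, Nat.sum_antidiagonal_eq_sum_range_succ_mk,
    map_sum, sum_mul]
  refine sum_congr rfl fun j hj => ?_
  rw [map_mul, PowerSeries.coeff_mk, mul_assoc, hs, Polynomial.coeff_coe, ← coeff_map,
    rectPoly_map, Nat.cast_sub (by simp at hj; omega)]

theorem map_alternant_rect (f : MvPolynomial (Fin n) ℚ →+* K) (a k : ℕ) :
    f (alternant n fun j => (if (j : ℕ) < a then k else 0) + (n - 1 - j)) =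
      rectAlternant (f ∘ MvPolynomial.X) a k := by
  rw [alternant, RingHom.map_det, rectAlternant]
  congr 1
  ext i j
  simp only [RingHom.mapMatrix_apply, Matrix.map_apply, Matrix.of_apply, map_pow,
    Function.comp_apply, rectExponent, ← zpow_natCast]
  congr 1
  have := j.isLt
  split_ifs <;> omega

end Rectangle

/-- Let `s k` be the Schur polynomial of the `a × k` rectangular partition in `n`
variables (bialternant formula `s_λ a_δ = a_{λ+δ}` with `δ = (n-1,…,1,0)`), and let
`Q(z) = ∏_{|I|=a} (1 - z u_I)`. Then `Q(z) ∑_{k≥0} s_{k^a} z^k` is a polynomial in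
`z` of degree `(n choose a) - n`. -/
theorem rect_schur_gf_poly (n a : ℕ) (ha : 1 ≤ a) (han : a ≤ n)
    (s : ℕ → MvPolynomial (Fin n) ℚ)
    (hs : ∀ k : ℕ, s k * alternant n (fun j => n - 1 - (j : ℕ)) =
      alternant n (fun j => (if (j : ℕ) < a then k else 0) + (n - 1 - (j : ℕ)))) :
    ∃ p : Polynomial (MvPolynomial (Fin n) ℚ),
      (p : PowerSeries (MvPolynomial (Fin n) ℚ)) =
        (∏ I ∈ (Finset.univ : Finset (Fin n)).powersetCard a,
          (1 - PowerSeries.C (∏ i ∈ I, MvPolynomial.X i) *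
            PowerSeries.X)) * PowerSeries.mk s ∧
      p.natDegree = n.choose a - n := by
  set φ := algebraMap (MvPolynomial (Fin n) ℚ) (FractionRing (MvPolynomial (Fin n) ℚ))
  have hφ : Function.Injective φ := IsFractionRing.injective _ _
  have hu : Function.Injective (φ ∘ MvPolynomial.X) := hφ.comp MvPolynomial.X_injective
  have hu0 : ∀ i, (φ ∘ MvPolynomial.X) i ≠ 0 := fun i =>
    (map_ne_zero_iff φ hφ).mpr (MvPolynomial.X_ne_zero i)
  have hδ : alternant n (fun j => n - 1 - (j : ℕ)) =
      alternant n fun j => (if (j : ℕ) < a then 0 else 0) + (n - 1 - j) := by simp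
  have hcoeff := coeff_rectSeries_comp φ MvPolynomial.X a (s := s) fun k => by
    rw [← map_alternant_rect, ← hs, hδ, map_mul, map_alternant_rect, Nat.cast_zero]
  rw [← rectPoly_coe]
  refine PowerSeries.exists_coe_eq_natDegree_eq _ _ (fun m hm => ?_) fun h => ?_
  · have := coeff_rectSeries_eq_zero hu0 ha han hm
    rw [hcoeff, mul_eq_zero, map_eq_zero_iff φ hφ] at this
    exact this.resolve_right (rectAlternant_zero_ne_zero hu hu0 a)
  · exact coeff_rectSeries_ne_zero hu hu0 ha han (by rw [hcoeff, h, map_zero, zero_mul])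
end

section
/- Let K(u) = u^b(1 - t P(u)) with P(u) = ∑_{s∈S} ω_s u^s, min S = -b, max S = a, ω_{-b} ≠ 0, ω_a ≠ 0, so that K is a polynomial of degree a+b in u over the field of Puiseux series in t. Then exactly b of the a+b roots of K (with multiplicity) have positive valuation in t (namely valuation 1/b to leading order) and the other a roots have valuation -1/a; in particular the product of the roots equals (-1)^{a+b} ω_{-b}/ω_a. -/
open scoped Classical

section KernelAux
variable {F : Type*} [Field F] (v : F → ℚ)
  (hv_mul : ∀ x y : F, x ≠ 0 → y ≠ 0 → v (x * y) = v x + v y)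

include hv_mul

lemma kaux_val_one : v 1 = 0 := by
  have := hv_mul 1 1 one_ne_zero one_ne_zero
  simp only [one_mul] at this; linarith

lemma kaux_val_neg_one : v (-1 : F) = 0 := by
  have h := hv_mul (-1) (-1) (by norm_num) (by norm_num)
  have h1 := kaux_val_one v hv_mul
  simp only [neg_mul_neg, one_mul] at h
  linarith

lemma kaux_val_neg (x : F) (hx : x ≠ 0) : v (-x) = v x := by
  have := hv_mul (-1) x (by norm_num) hx
  rw [neg_one_mul] at this
  rw [this, kaux_val_neg_one v hv_mul]; ring

lemma kaux_val_pow (x : F) (hx : x ≠ 0) (n : ℕ) : v (x ^ n) = n * v x := by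
  induction n with
  | zero => simpa using kaux_val_one v hv_mul
  | succ n ih =>
    rw [pow_succ, hv_mul _ x (pow_ne_zero n hx) hx, ih]
    push_cast; ring

lemma kaux_val_inv (x : F) (hx : x ≠ 0) : v x⁻¹ = -v x := by
  have := hv_mul x x⁻¹ hx (inv_ne_zero hx)
  rw [mul_inv_cancel₀ hx, kaux_val_one v hv_mul] at this
  linarith

variable (hv_add : ∀ x y : F, x ≠ 0 → y ≠ 0 → x + y ≠ 0 → min (v x) (v y) ≤ v (x + y))
include hv_add

lemma kaux_val_add_of_lt (x y : F) (hx : x ≠ 0) (h : y ≠ 0 → v x < v y) :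
    v (x + y) = v x := by
  by_cases hy : y = 0
  · simp [hy]
  have hlt := h hy
  have hxy : x + y ≠ 0 := by
    intro h0
    have hxe : x = -y := by linear_combination h0
    rw [hxe, kaux_val_neg v hv_mul y hy] at hlt
    exact lt_irrefl _ hlt
  have h1 : v x ≤ v (x + y) := by
    have := hv_add x y hx hy hxy
    exact le_trans (le_min (le_refl _) (le_of_lt hlt)) this
  have h2 : v (x + y) ≤ v x := by
    have hrw : (x + y) + (-y) = x := by ring
    have hmin := hv_add (x + y) (-y) hxy (neg_ne_zero.mpr hy) (by rw [hrw]; exact hx)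
    rw [hrw, kaux_val_neg v hv_mul y hy] at hmin
    rcases min_le_iff.mp hmin with h' | h'
    · exact h'
    · linarith
  linarith

set_option linter.unusedSectionVars false in
lemma kaux_val_sum_lt {ι : Type*} (s : Finset ι) (f : ι → F) (c : ℚ)
    (h : ∀ i ∈ s, f i ≠ 0 → c < v (f i)) (hs : ∑ i ∈ s, f i ≠ 0) :
    c < v (∑ i ∈ s, f i) := by
  classical
  induction s using Finset.induction_on with
  | empty => simp at hs
  | @insert j s' hj ih =>
    rw [Finset.sum_insert hj] at hs ⊢
    by_cases hfj : f j = 0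
    · rw [hfj, zero_add] at hs ⊢
      exact ih (fun i hi' => h i (Finset.mem_insert_of_mem hi')) hs
    by_cases hrest : ∑ i ∈ s', f i = 0
    · rw [hrest, add_zero]
      exact h j (Finset.mem_insert_self j s') hfj
    · have h1 := h j (Finset.mem_insert_self j s') hfj
      have h2 := ih (fun i hi' => h i (Finset.mem_insert_of_mem hi')) hrest
      have h3 := hv_add (f j) _ hfj hrest hs
      exact lt_of_lt_of_le (lt_min h1 h2) h3

omit hv_add in
lemma kaux_val_prod {ι : Type*} (s : Finset ι) (f : ι → F)
    (h : ∀ i ∈ s, f i ≠ 0) : v (∏ i ∈ s, f i) = ∑ i ∈ s, v (f i) := by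
  classical
  induction s using Finset.induction_on with
  | empty => simpa using kaux_val_one v hv_mul
  | @insert j s' hj ih =>
    rw [Finset.prod_insert hj, Finset.sum_insert hj,
      hv_mul _ _ (h j (Finset.mem_insert_self j s'))
        (Finset.prod_ne_zero_iff.mpr fun i hi => h i (Finset.mem_insert_of_mem hi)),
      ih (fun i hi => h i (Finset.mem_insert_of_mem hi))]

end KernelAux

/-- Let `K(u) = u^b(1 - t P(u))` with `P(u) = ∑_{s∈S} ω_s u^s`, `min S = -b`,
`max S = a`, `ω_{-b} ≠ 0 ≠ ω_a`, viewed as a polynomial of degree `a + b` over a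
field `F` (e.g. the Puiseux series field) equipped with a valuation `v` with
`v(t) = 1` and `v(ω_s) = 0`. If `K(u)` factors completely with roots `U_i`, then
exactly `b` of the roots have valuation `1/b` (in particular positive) and the
other `a` roots have valuation `-1/a`; moreover the product of all roots equals
`(-1)^{a+b} ω_{-b} / ω_a`. -/
theorem kernel_roots_valuation {F : Type*} [Field F]
    (S : Finset ℤ) (a b : ℕ) (ha : 1 ≤ a) (hb : 1 ≤ b)
    (haS : (a : ℤ) ∈ S) (hbS : (-(b : ℤ)) ∈ S)
    (hrange : ∀ s ∈ S, -(b : ℤ) ≤ s ∧ s ≤ (a : ℤ))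
    (ω : ℤ → F) (hωb : ω (-(b : ℤ)) ≠ 0) (hωa : ω (a : ℤ) ≠ 0)
    (t : F) (ht : t ≠ 0)
    (v : F → ℚ)
    (hv_mul : ∀ x y : F, x ≠ 0 → y ≠ 0 → v (x * y) = v x + v y)
    (hv_add : ∀ x y : F, x ≠ 0 → y ≠ 0 → x + y ≠ 0 → min (v x) (v y) ≤ v (x + y))
    (hvt : v t = 1) (hvω : ∀ s ∈ S, ω s ≠ 0 → v (ω s) = 0)
    (U : Fin (a + b) → F)
    (hfact : (Polynomial.X ^ b -
        Polynomial.C t * ∑ s ∈ S, Polynomial.C (ω s) * Polynomial.X ^ ((b : ℤ) + s).toNat :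
          Polynomial F) =
      Polynomial.C (-t * ω (a : ℤ)) * ∏ i, (Polynomial.X - Polynomial.C (U i))) :
    (Finset.univ.filter fun i => v (U i) = 1 / (b : ℚ)).card = b ∧
    (Finset.univ.filter fun i => v (U i) = -(1 / (a : ℚ))).card = a ∧
    ∏ i, U i = (-1) ^ (a + b) * ω (-(b : ℤ)) / ω (a : ℤ) := by
  -- evaluation at 0
  have h0 : -(t * ω (-(b : ℤ))) = (-t * ω (a : ℤ)) * ∏ i, (0 - U i) := by
    have h := congrArg (Polynomial.eval 0) hfact
    simp only [Polynomial.eval_sub, Polynomial.eval_pow, Polynomial.eval_X,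
      Polynomial.eval_mul, Polynomial.eval_C, Polynomial.eval_finset_sum,
      Polynomial.eval_prod] at h
    rw [zero_pow (by omega : b ≠ 0)] at h
    rw [Finset.sum_eq_single_of_mem (-(b : ℤ)) hbS (by
      intro s hs hne
      have hr := hrange s hs
      rw [zero_pow (by omega : ((b : ℤ) + s).toNat ≠ 0), mul_zero])] at h
    simpa using h
  -- roots are nonzero
  have hUne : ∀ i, U i ≠ 0 := by
    intro i hUi
    rw [Finset.prod_eq_zero (Finset.mem_univ i) (by rw [hUi, sub_zero]), mul_zero] at h0
    exact ht (by simpa [hωb] using h0)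
  -- product of roots
  have hcard : (Finset.univ : Finset (Fin (a + b))).card = a + b := by simp
  have hprodneg : (∏ i, (0 - U i)) = (-1 : F) ^ (a + b) * ∏ i, U i := by
    have h1 : (∏ i, (0 - U i)) = ∏ i, (-1 : F) * U i :=
      Finset.prod_congr rfl fun i _ => by ring
    rw [h1, Finset.prod_mul_distrib, Finset.prod_const, hcard]
  have hPne : (∏ i, U i) ≠ 0 := Finset.prod_ne_zero_iff.mpr fun i _ => hUne i
  have hprod : ∏ i, U i = (-1) ^ (a + b) * ω (-(b : ℤ)) / ω (a : ℤ) := by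
    rw [hprodneg] at h0
    have hsq : ((-1 : F)) ^ (a + b) * ((-1 : F)) ^ (a + b) = 1 := by
      rw [← mul_pow]; norm_num
    have h1 : ω (-(b : ℤ)) = ω (a : ℤ) * ((-1) ^ (a + b) * ∏ i, U i) := by
      apply mul_left_cancel₀ ht
      linear_combination -h0
    rw [eq_div_iff hωa]
    linear_combination (-(-1 : F) ^ (a + b)) * h1 - (∏ i, U i) * ω (a : ℤ) * hsq
  -- root equation
  have hroot : ∀ j, (U j) ^ b = ∑ s ∈ S, t * (ω s * (U j) ^ ((b : ℤ) + s).toNat) := by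
    intro j
    have h := congrArg (Polynomial.eval (U j)) hfact
    simp only [Polynomial.eval_sub, Polynomial.eval_pow, Polynomial.eval_X,
      Polynomial.eval_mul, Polynomial.eval_C, Polynomial.eval_finset_sum,
      Polynomial.eval_prod] at h
    rw [Finset.prod_eq_zero (Finset.mem_univ j) (by simp), mul_zero, sub_eq_zero] at h
    rw [h, Finset.mul_sum]
  -- valuations of individual roots
  have hval : ∀ j, v (U j) = 1 / (b : ℚ) ∨ v (U j) = -(1 / (a : ℚ)) := by
    intro j
    set w := v (U j) with hw
    have hUj := hUne j
    have hterm : ∀ s ∈ S, ω s ≠ 0 →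
        v (t * (ω s * (U j) ^ ((b : ℤ) + s).toNat)) = 1 + (((b : ℤ) + s).toNat : ℚ) * w := by
      intro s hs hωs
      rw [hv_mul t _ ht (mul_ne_zero hωs (pow_ne_zero _ hUj)),
        hv_mul (ω s) _ hωs (pow_ne_zero _ hUj), hvt, hvω s hs hωs,
        kaux_val_pow v hv_mul _ hUj]
      ring
    have hvUb : v ((U j) ^ b) = (b : ℚ) * w := kaux_val_pow v hv_mul _ hUj b
    rcases lt_trichotomy w 0 with hw0 | hw0 | hw0
    · -- negative valuation: w = -1/a
      right
      have hsplit := (Finset.add_sum_erase S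
        (fun s => t * (ω s * (U j) ^ ((b : ℤ) + s).toNat)) haS).symm
      have hea : (((b : ℤ) + (a : ℤ)).toNat) = a + b := by omega
      have hfa : t * (ω (a : ℤ) * (U j) ^ (((b : ℤ) + (a : ℤ)).toNat)) ≠ 0 :=
        mul_ne_zero ht (mul_ne_zero hωa (pow_ne_zero _ hUj))
      have hva : v (t * (ω (a : ℤ) * (U j) ^ (((b : ℤ) + (a : ℤ)).toNat)))
          = 1 + ((a + b : ℕ) : ℚ) * w := by
        rw [hterm (a : ℤ) haS hωa, hea]
      have hkey : (b : ℚ) * w = 1 + ((a + b : ℕ) : ℚ) * w := by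
        rw [← hvUb, hroot j, hsplit, kaux_val_add_of_lt v hv_mul hv_add _ _ hfa, hva]
        intro hrest
        rw [hva]
        apply kaux_val_sum_lt v hv_mul hv_add _ _ _ _ hrest
        intro s hs hfs
        have hsS : s ∈ S := Finset.mem_of_mem_erase hs
        have hsne : s ≠ (a : ℤ) := Finset.ne_of_mem_erase hs
        have hωs : ω s ≠ 0 := by
          intro h'; exact hfs (by rw [h']; ring)
        rw [hterm s hsS hωs]
        have hr := hrange s hsS
        have hlt : (((b : ℤ) + s).toNat : ℚ) < ((a + b : ℕ) : ℚ) := by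
          have : ((b : ℤ) + s).toNat < a + b := by omega
          exact_mod_cast this
        nlinarith
      have haQ : (0 : ℚ) < (a : ℚ) := by exact_mod_cast ha
      have h2 : (a : ℚ) * w = -1 := by push_cast at hkey; linarith
      rw [hw] at *
      field_simp
      linarith
    · -- zero valuation: impossible
      exfalso
      have hlt : (0 : ℚ) < v ((U j) ^ b) := by
        rw [hroot j]
        apply kaux_val_sum_lt v hv_mul hv_add _ _ _ _ (by rw [← hroot j]; exact pow_ne_zero _ hUj)
        intro s hs hfs
        have hωs : ω s ≠ 0 := by intro h'; exact hfs (by rw [h']; ring)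
        rw [hterm s hs hωs, hw0]
        norm_num
      rw [hvUb, hw0, mul_zero] at hlt
      exact lt_irrefl _ hlt
    · -- positive valuation: w = 1/b
      left
      have hsplit := (Finset.add_sum_erase S
        (fun s => t * (ω s * (U j) ^ ((b : ℤ) + s).toNat)) hbS).symm
      have heb : (((b : ℤ) + -(b : ℤ)).toNat) = 0 := by omega
      have hfb : t * (ω (-(b : ℤ)) * (U j) ^ (((b : ℤ) + -(b : ℤ)).toNat)) ≠ 0 :=
        mul_ne_zero ht (mul_ne_zero hωb (pow_ne_zero _ hUj))
      have hvb : v (t * (ω (-(b : ℤ)) * (U j) ^ (((b : ℤ) + -(b : ℤ)).toNat))) = 1 := by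
        rw [hterm (-(b : ℤ)) hbS hωb, heb]; norm_num
      have hkey : (b : ℚ) * w = 1 := by
        rw [← hvUb, hroot j, hsplit, kaux_val_add_of_lt v hv_mul hv_add _ _ hfb, hvb]
        intro hrest
        rw [hvb]
        apply kaux_val_sum_lt v hv_mul hv_add _ _ _ _ hrest
        intro s hs hfs
        have hsS : s ∈ S := Finset.mem_of_mem_erase hs
        have hsne : s ≠ -(b : ℤ) := Finset.ne_of_mem_erase hs
        have hωs : ω s ≠ 0 := by intro h'; exact hfs (by rw [h']; ring)
        rw [hterm s hsS hωs]
        have hr := hrange s hsS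
        have hge : (1 : ℚ) ≤ (((b : ℤ) + s).toNat : ℚ) := by
          have : 1 ≤ ((b : ℤ) + s).toNat := by omega
          exact_mod_cast this
        nlinarith
      have hbQ : (0 : ℚ) < (b : ℚ) := by exact_mod_cast hb
      rw [hw] at *
      field_simp
      linarith
  -- sum of valuations is zero
  have haQ : (0 : ℚ) < (a : ℚ) := by exact_mod_cast ha
  have hbQ : (0 : ℚ) < (b : ℚ) := by exact_mod_cast hb
  have hsumval : ∑ i, v (U i) = 0 := by
    rw [← kaux_val_prod v hv_mul Finset.univ U (fun i _ => hUne i), hprod, div_eq_mul_inv,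
      hv_mul _ _ (mul_ne_zero (pow_ne_zero _ (by norm_num)) hωb) (inv_ne_zero hωa),
      hv_mul _ _ (pow_ne_zero _ (by norm_num)) hωb,
      kaux_val_pow v hv_mul _ (by norm_num), kaux_val_neg_one v hv_mul,
      kaux_val_inv v hv_mul _ hωa, hvω _ hbS hωb, hvω _ haS hωa]
    ring
  -- counting
  set n := (Finset.univ.filter fun i => v (U i) = 1 / (b : ℚ)).card with hn
  have hcompl : (Finset.univ.filter fun i => ¬ (v (U i) = 1 / (b : ℚ)))
      = (Finset.univ.filter fun i => v (U i) = -(1 / (a : ℚ))) := by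
    apply Finset.filter_congr
    intro i _
    constructor
    · intro h'
      rcases hval i with h1 | h1
      · exact absurd h1 h'
      · exact h1
    · intro h1 h2
      rw [h1] at h2
      have : (0 : ℚ) < 1 / (b : ℚ) := by positivity
      rw [← h2] at this
      have : (0 : ℚ) < 1 / (a : ℚ) := by positivity
      linarith
  have hcards : n + (Finset.univ.filter fun i => v (U i) = -(1 / (a : ℚ))).card = a + b := by
    rw [← hcompl, hn, Finset.card_filter_add_card_filter_not, Finset.card_univ,
      Fintype.card_fin]
  set m := (Finset.univ.filter fun i => v (U i) = -(1 / (a : ℚ))).card with hm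
  have hsplit := Finset.sum_filter_add_sum_filter_not Finset.univ
    (fun i => v (U i) = 1 / (b : ℚ)) (fun i => v (U i))
  have hs1 : ∑ i ∈ Finset.univ.filter (fun i => v (U i) = 1 / (b : ℚ)), v (U i)
      = (n : ℚ) * (1 / (b : ℚ)) := by
    rw [Finset.sum_congr rfl (fun i hi => (Finset.mem_filter.mp hi).2), Finset.sum_const,
      nsmul_eq_mul]
  have hs2 : ∑ i ∈ Finset.univ.filter (fun i => ¬ (v (U i) = 1 / (b : ℚ))), v (U i)
      = (m : ℚ) * (-(1 / (a : ℚ))) := by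
    rw [hcompl, Finset.sum_congr rfl (fun i hi => (Finset.mem_filter.mp hi).2), Finset.sum_const,
      nsmul_eq_mul]
  rw [hs1, hs2, hsumval] at hsplit
  have he : (n : ℚ) * (a : ℚ) = (m : ℚ) * (b : ℚ) := by
    field_simp at hsplit
    linarith
  have hmq : (m : ℚ) = (a : ℚ) + (b : ℚ) - n := by
    have h' : ((n + m : ℕ) : ℚ) = ((a + b : ℕ) : ℚ) := by rw [hcards]
    push_cast at h'
    linarith
  rw [hmq] at he
  have key : ((n : ℚ) - (b : ℚ)) * ((a : ℚ) + (b : ℚ)) = 0 := by linear_combination he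
  have hnb : (n : ℚ) = (b : ℚ) := by
    rcases mul_eq_zero.mp key with h' | h'
    · linarith
    · linarith
  have hnb' : n = b := by exact_mod_cast hnb
  exact ⟨hnb', by omega, hprod⟩
end
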